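/- arXiv:2510.25710 — 3 statements merged into one kernel-verified Lean document; each statement's English description precedes it below -/
import Mathlib

section
/- Let n ≥ 3 and r ≥ 3 be integers, and let C_n^c be the complement of the cycle graph on n vertices. Then the simplicial complex Σ_r(C_n^c) is vertex decomposable. -/
open Finset

variable {V : Type*} [Fintype V] [DecidableEq V]

/-- The induced subgraph of `G` on the finset `s` is connected. -/
def ConnOn (G : SimpleGraph V) (s : Finset V) : Prop :=
  (G.induce (s : Set V)).Connected

/-- `Supp_r(A, G)` relative to the ground (vertex) set `U`:
all `F ⊆ U` with `|F| = r`, `F ∩ A = ∅` and `G[F ∪ A]` connected. -/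
def Supp (G : SimpleGraph V) (U A : Finset V) (r : ℕ) : Set (Finset V) :=
  {F | F ⊆ U ∧ F.card = r ∧ F ∩ A = ∅ ∧ ConnOn G (F ∪ A)}

/-- The `r`-co-connected complex `Σ_r(A, G)` on ground set `U`: faces are all subsets of
sets of the form `(U \ F) \ A` with `F ∈ Supp_r(A, G)`. -/
def SigmaC (G : SimpleGraph V) (U A : Finset V) (r : ℕ) : Set (Finset V) :=
  {H | ∃ F ∈ Supp G U A r, H ⊆ (U \ F) \ A}

/-- The circuit set of the `r`-connected clutter `Con_r(G)` on ground set `U`. -/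
def ConR (G : SimpleGraph V) (U : Finset V) (r : ℕ) : Set (Finset V) :=
  {W | W ⊆ U ∧ W.card = r ∧ ConnOn G W}

/-- `Σ_r(G)`: faces are all subsets of sets of the form `U \ W`, `W ∈ Con_r(G)`. -/
def SigmaG (G : SimpleGraph V) (U : Finset V) (r : ℕ) : Set (Finset V) :=
  {H | ∃ W ∈ ConR G U r, H ⊆ U \ W}

/-- Deletion of a vertex in a simplicial complex. -/
def delC (Δ : Set (Finset V)) (x : V) : Set (Finset V) :=
  {H | H ∈ Δ ∧ x ∉ H}

/-- Link of a vertex in a simplicial complex. -/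
def linkC (Δ : Set (Finset V)) (x : V) : Set (Finset V) :=
  {H | H ∈ Δ ∧ x ∉ H ∧ insert x H ∈ Δ}

/-- A facet is a maximal face. -/
def IsFacet (Δ : Set (Finset V)) (F : Finset V) : Prop :=
  F ∈ Δ ∧ ∀ H ∈ Δ, F ⊆ H → F = H

/-- `x` is a shedding vertex: every facet of `del_Δ(x)` is a facet of `Δ`. -/
def IsShedding (Δ : Set (Finset V)) (x : V) : Prop :=
  ∀ F, IsFacet (delC Δ x) F → IsFacet Δ F

/-- Vertex decomposability of a simplicial complex (the void complex, the empty complex and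
simplices are vertex decomposable; otherwise one needs a shedding vertex whose link and
deletion are vertex decomposable). -/
inductive VD {V : Type*} [DecidableEq V] : Set (Finset V) → Prop
  | simplex (s : Finset V) : VD {t | t ⊆ s}
  | void : VD (∅ : Set (Finset V))
  | step (Δ : Set (Finset V)) (x : V) (hx : {x} ∈ Δ) (hshed : IsShedding Δ x)
      (hlink : VD (linkC Δ x)) (hdel : VD (delC Δ x)) : VD Δ

lemma vd_congr {Δ Δ' : Set (Finset V)} (h : Δ = Δ') (hv : VD Δ') : VD Δ := h ▸ hv

lemma reach_inv {V' : Type*} {G : SimpleGraph V'} (P : V' → Prop)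
    (hP : ∀ a b, G.Adj a b → P a → P b) {u v : V'} (h : G.Reachable u v) (hu : P u) : P v := by
  obtain ⟨w⟩ := h
  induction w with
  | nil => exact hu
  | cons h p ih => exact ih (hP _ _ h hu)

lemma not_connected_of_isolated {G : SimpleGraph V} {s : Finset V} {m x : V}
    (hm : m ∈ s) (hx : x ∈ s) (hne : x ≠ m)
    (hiso : ∀ v ∈ s, ¬ G.Adj m v) : ¬ ConnOn G s := by
  intro h
  have hreach := h.preconnected ⟨m, Finset.mem_coe.mpr hm⟩ ⟨x, Finset.mem_coe.mpr hx⟩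
  have := reach_inv (G := G.induce (s : Set V)) (fun v => v.1 = m)
    (fun a b hab ha => by
      exfalso
      have : G.Adj a.1 b.1 := hab
      rw [ha] at this
      exact hiso b.1 (Finset.mem_coe.mp b.2) this) hreach rfl
  exact hne this

lemma conn_of_star {G : SimpleGraph V} {s : Finset V} {m : V} (hm : m ∈ s)
    (h : ∀ v ∈ s, v = m ∨ G.Adj m v) : ConnOn G s := by
  rw [ConnOn, SimpleGraph.connected_iff]
  refine ⟨?_, ⟨⟨m, Finset.mem_coe.mpr hm⟩⟩⟩
  have key : ∀ u : (s : Set V), (G.induce (s : Set V)).Reachable ⟨m, Finset.mem_coe.mpr hm⟩ u := by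
    rintro ⟨u, hu⟩
    rcases h u (Finset.mem_coe.mp hu) with h1 | h1
    · subst h1; rfl
    · exact (SimpleGraph.Adj.reachable (by exact h1))
  intro u v
  exact (key u).symm.trans (key v)

lemma vd_skeleton (s : Finset V) (kk : ℕ) : VD {H : Finset V | H ⊆ s ∧ H.card ≤ kk} := by
  induction s using Finset.strongInduction generalizing kk with
  | _ s ih =>
  by_cases hcard : s.card ≤ kk
  · refine vd_congr ?_ (VD.simplex s)
    ext H
    simp only [Set.mem_setOf_eq, and_iff_left_iff_imp]
    intro hHs
    exact le_trans (Finset.card_le_card hHs) hcard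
  · push_neg at hcard
    match kk with
    | 0 =>
      refine vd_congr ?_ (VD.simplex (∅ : Finset V))
      ext H
      simp only [Set.mem_setOf_eq, Nat.le_zero, Finset.card_eq_zero, Finset.subset_empty]
      constructor
      · rintro ⟨-, h⟩; exact h
      · rintro rfl; exact ⟨Finset.empty_subset _, rfl⟩
    | (k' + 1) =>
      obtain ⟨x, hxs⟩ : s.Nonempty := Finset.card_pos.mp (by omega)
      have hdel_eq : delC {H : Finset V | H ⊆ s ∧ H.card ≤ k' + 1} x
          = {H : Finset V | H ⊆ s.erase x ∧ H.card ≤ k' + 1} := by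
        ext H
        simp only [delC, Set.mem_setOf_eq, Finset.subset_erase]
        tauto
      have hlink_eq : linkC {H : Finset V | H ⊆ s ∧ H.card ≤ k' + 1} x
          = {H : Finset V | H ⊆ s.erase x ∧ H.card ≤ k'} := by
        ext H
        simp only [linkC, Set.mem_setOf_eq, Finset.subset_erase, Finset.insert_subset_iff]
        constructor
        · rintro ⟨⟨h1, h2⟩, h3, ⟨h4, h5⟩, h6⟩
          refine ⟨⟨h1, h3⟩, ?_⟩
          rw [Finset.card_insert_of_notMem h3] at h6
          omega
        · rintro ⟨⟨h1, h2⟩, h3⟩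
          refine ⟨⟨h1, by omega⟩, h2, ⟨hxs, h1⟩, ?_⟩
          rw [Finset.card_insert_of_notMem h2]
          omega
      refine VD.step _ x ⟨Finset.singleton_subset_iff.mpr hxs, by simp⟩ ?_ ?_ ?_
      · -- shedding
        rintro F ⟨hFmem, hFmax⟩
        rw [hdel_eq] at hFmem hFmax
        obtain ⟨hF1, hF2⟩ := hFmem
        have hcards : k' + 1 ≤ (s.erase x).card := by
          rw [Finset.card_erase_of_mem hxs]; omega
        have hFc : F.card = k' + 1 := by
          by_contra hne
          have hlt : F.card < k' + 1 := by omega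
          have : ¬ (s.erase x ⊆ F) := by
            intro hsub
            have := Finset.card_le_card hsub
            omega
          obtain ⟨y, hy1, hy2⟩ := Finset.not_subset.mp this
          have hmem : insert y F ∈ {H : Finset V | H ⊆ s.erase x ∧ H.card ≤ k' + 1} := by
            refine ⟨Finset.insert_subset hy1 hF1, ?_⟩
            rw [Finset.card_insert_of_notMem hy2]; omega
          have := hFmax _ hmem (Finset.subset_insert _ _)
          exact hy2 (this ▸ Finset.mem_insert_self y F)
        constructor
        · exact ⟨hF1.trans (Finset.erase_subset _ _), hF2⟩
        · rintro H ⟨hH1, hH2⟩ hFH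
          exact Finset.eq_of_subset_of_card_le hFH (by omega)
      · rw [hlink_eq]; exact ih _ (Finset.erase_ssubset hxs) k'
      · rw [hdel_eq]; exact ih _ (Finset.erase_ssubset hxs) (k' + 1)

/-! ### Cycle graph adjacency facts -/

abbrev CA (k : ℕ) (u v : Fin (k + 2)) : Prop := (SimpleGraph.cycleGraph (k + 2)).Adj u v

lemma ca_symm {k : ℕ} {u v : Fin (k + 2)} (h : CA k u v) : CA k v u := h.symm

lemma ca_iff {k : ℕ} {u v : Fin (k + 2)} : CA k u v ↔ u - v = 1 ∨ v - u = 1 :=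
  SimpleGraph.cycleGraph_adj

open Fin.CommRing Fin.NatCast in
lemma ca_pm {k : ℕ} {u v : Fin (k + 2)} (h : CA k u v) : v = u + 1 ∨ v = u - 1 := by
  rcases ca_iff.mp h with h1 | h1
  · right; linear_combination -h1
  · left; linear_combination h1

open Fin.CommRing Fin.NatCast in
lemma fin_ne_zero {k : ℕ} (hk : 3 ≤ k) (j : ℕ) (hj1 : 1 ≤ j) (hj4 : j ≤ 4) :
    (j : Fin (k + 2)) ≠ 0 := by
  intro h
  have hv := congrArg Fin.val h
  rw [Fin.val_natCast] at hv
  simp only [Fin.val_zero] at hv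
  rw [Nat.mod_eq_of_lt (by omega)] at hv
  omega

lemma fin1 {k : ℕ} (hk : 3 ≤ k) : (1 : Fin (k + 2)) ≠ 0 := by
  have := fin_ne_zero hk 1 le_rfl (by norm_num); simpa using this

lemma fin2 {k : ℕ} (hk : 3 ≤ k) : (2 : Fin (k + 2)) ≠ 0 := by
  have := fin_ne_zero hk 2 (by norm_num) (by norm_num); simpa using this

lemma fin3 {k : ℕ} (hk : 3 ≤ k) : (3 : Fin (k + 2)) ≠ 0 := by
  have := fin_ne_zero hk 3 (by norm_num) (by norm_num); simpa using this

lemma fin4 {k : ℕ} (hk : 3 ≤ k) : (4 : Fin (k + 2)) ≠ 0 := by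
  have := fin_ne_zero hk 4 (by norm_num) le_rfl; simpa using this

/-- Degree at most 2. -/
lemma F2 {k : ℕ} {x a b c : Fin (k + 2)}
    (ha : CA k x a) (hb : CA k x b) (hc : CA k x c) : a = b ∨ a = c ∨ b = c := by
  rcases ca_pm ha with h1 | h1 <;> rcases ca_pm hb with h2 | h2 <;>
    rcases ca_pm hc with h3 | h3 <;> subst h1 <;> subst h2 <;> subst h3 <;> tauto

open Fin.CommRing Fin.NatCast in
/-- No triangles. -/
lemma F3 {k : ℕ} (hk : 3 ≤ k) {a b c : Fin (k + 2)}
    (hab : CA k a b) (hbc : CA k b c) (hac : CA k a c) : False := by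
  have hne := hac.ne
  rcases ca_pm hab with h1 | h1 <;> rcases ca_pm hbc with h2 | h2 <;> subst h2 <;> subst h1 <;>
    rcases ca_pm hac with h3 | h3 <;>
    first
      | exact fin1 hk (by linear_combination h3)
      | exact fin1 hk (by linear_combination -h3)
      | exact fin2 hk (by linear_combination h3)
      | exact fin2 hk (by linear_combination -h3)
      | exact fin3 hk (by linear_combination h3)
      | exact fin3 hk (by linear_combination -h3)
      | exact hne (by linear_combination h3)
      | exact hne (by linear_combination -h3)
      | exact hne (by linear_combination (0 : Fin (k+2)) = 0)

open Fin.CommRing Fin.NatCast in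
/-- No 4-cycles. -/
lemma F4 {k : ℕ} (hk : 3 ≤ k) {a b c d : Fin (k + 2)}
    (hab : CA k a b) (hbc : CA k b c) (hcd : CA k c d) (hda : CA k d a)
    (hac : a ≠ c) (hbd : b ≠ d) : False := by
  rcases ca_pm hab with h1 | h1 <;> rcases ca_pm hbc with h2 | h2 <;>
    rcases ca_pm hcd with h3 | h3 <;> subst h3 <;> subst h2 <;> subst h1 <;>
    rcases ca_pm hda with h4 | h4 <;>
    first
      | exact fin2 hk (by linear_combination h4)
      | exact fin2 hk (by linear_combination -h4)
      | exact fin4 hk (by linear_combination h4)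
      | exact fin4 hk (by linear_combination -h4)
      | exact hac (by linear_combination h4)
      | exact hac (by linear_combination -h4)
      | exact hbd (by linear_combination h4)
      | exact hbd (by linear_combination -h4)
      | exact hac (by linear_combination (0 : Fin (k+2)) = 0)
      | exact hbd (by linear_combination (0 : Fin (k+2)) = 0)

/-! ### Triples -/

def hasMid (k : ℕ) (a b c : Fin (k + 2)) : Prop :=
  (CA k a b ∧ CA k a c) ∨ (CA k b a ∧ CA k b c) ∨ (CA k c a ∧ CA k c b)

def Tri (k : ℕ) (a b c : Fin (k + 2)) : Prop :=
  a ≠ b ∧ a ≠ c ∧ b ≠ c ∧ ¬ hasMid k a b c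

lemma hasMid_swap {k : ℕ} {a b c : Fin (k + 2)} (h : hasMid k a b c) : hasMid k a c b := by
  unfold hasMid at *; tauto

lemma hasMid_rot {k : ℕ} {a b c : Fin (k + 2)} (h : hasMid k a b c) : hasMid k b c a := by
  unfold hasMid at *; tauto

lemma tri_swap {k : ℕ} {a b c : Fin (k + 2)} (h : Tri k a b c) : Tri k a c b :=
  ⟨h.2.1, h.1, fun e => h.2.2.1 e.symm, fun m => h.2.2.2 (hasMid_swap m)⟩

lemma tri_rot {k : ℕ} {a b c : Fin (k + 2)} (h : Tri k a b c) : Tri k b c a :=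
  ⟨h.2.2.1, fun e => h.1 e.symm, fun e => h.2.1 e.symm, fun m => h.2.2.2 (hasMid_rot (hasMid_rot m))⟩

lemma tri_transfer {k : ℕ} {a b c p q s : Fin (k + 2)} (hT : Tri k a b c)
    (hp : a = p ∨ a = q ∨ a = s) (hq : b = p ∨ b = q ∨ b = s) (hs : c = p ∨ c = q ∨ c = s) :
    Tri k p q s := by
  have hcopy := hT
  obtain ⟨h1, h2, h3, -⟩ := hcopy
  rcases hp with rfl | rfl | rfl <;> rcases hq with rfl | rfl | rfl <;>
    rcases hs with rfl | rfl | rfl <;>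
    first
      | exact absurd rfl h1
      | exact absurd rfl h2
      | exact absurd rfl h3
      | exact hT
      | exact tri_swap hT
      | exact tri_rot hT
      | exact tri_rot (tri_rot hT)
      | exact tri_swap (tri_rot hT)
      | exact tri_swap (tri_rot (tri_rot hT))

lemma no_three_mids {k : ℕ} (hk : 3 ≤ k) {x a b c : Fin (k + 2)}
    (hab : a ≠ b) (hac : a ≠ c) (hbc : b ≠ c) (hxa : x ≠ a) (hxb : x ≠ b) (hxc : x ≠ c)
    (m1 : hasMid k x a b) (m2 : hasMid k x a c) (m3 : hasMid k x b c) : False := by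
  by_cases ha : CA k x a <;> by_cases hb : CA k x b <;> by_cases hc : CA k x c
  · rcases F2 ha hb hc with h | h | h <;> tauto
  · -- xa, xb, ¬xc
    have h1 : CA k a c := by
      rcases m2 with ⟨-, h⟩ | ⟨h, h'⟩ | ⟨h, -⟩
      · exact absurd h hc
      · exact h'
      · exact absurd (ca_symm h) hc
    have h2 : CA k b c := by
      rcases m3 with ⟨-, h⟩ | ⟨h, h'⟩ | ⟨h, -⟩
      · exact absurd h hc
      · exact h'
      · exact absurd (ca_symm h) hc
    exact F4 hk ha h1 (ca_symm h2) (ca_symm hb) hxc hab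
  · -- xa, ¬xb, xc
    have h1 : CA k a b := by
      rcases m1 with ⟨-, h⟩ | ⟨-, h⟩ | ⟨h, -⟩
      · exact absurd h hb
      · exact h
      · exact absurd (ca_symm h) hb
    have h2 : CA k c b := by
      rcases m3 with ⟨h, -⟩ | ⟨h, -⟩ | ⟨-, h⟩
      · exact absurd h hb
      · exact absurd (ca_symm h) hb
      · exact h
    exact F4 hk ha h1 (ca_symm h2) (ca_symm hc) hxb hac
  · -- xa only
    rcases m3 with ⟨h, -⟩ | ⟨h, -⟩ | ⟨h, -⟩
    · exact hb h
    · exact hb (ca_symm h)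
    · exact hc (ca_symm h)
  · -- ¬xa, xb, xc
    have h1 : CA k a b := by
      rcases m1 with ⟨h, -⟩ | ⟨-, h⟩ | ⟨-, h⟩
      · exact absurd h ha
      · exact h
      · exact ca_symm h
    have h2 : CA k a c := by
      rcases m2 with ⟨h, -⟩ | ⟨-, h⟩ | ⟨-, h⟩
      · exact absurd h ha
      · exact h
      · exact ca_symm h
    exact F4 hk hb (ca_symm h1) h2 (ca_symm hc) hxa hbc
  · -- xb only
    rcases m2 with ⟨h, -⟩ | ⟨h, -⟩ | ⟨h, -⟩
    · exact ha h
    · exact ha (ca_symm h)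
    · exact hc (ca_symm h)
  · -- xc only
    rcases m1 with ⟨h, -⟩ | ⟨h, -⟩ | ⟨h, -⟩
    · exact ha h
    · exact ha (ca_symm h)
    · exact hb (ca_symm h)
  · rcases m1 with ⟨h, -⟩ | ⟨h, -⟩ | ⟨h, -⟩
    · exact ha h
    · exact ha (ca_symm h)
    · exact hb (ca_symm h)

lemma exists_tri_of_four {k : ℕ} (hk : 3 ≤ k) {x a b c : Fin (k + 2)}
    (hab : a ≠ b) (hac : a ≠ c) (hbc : b ≠ c) (hxa : x ≠ a) (hxb : x ≠ b) (hxc : x ≠ c) :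
    Tri k x a b ∨ Tri k x a c ∨ Tri k x b c := by
  by_cases m1 : hasMid k x a b
  · by_cases m2 : hasMid k x a c
    · by_cases m3 : hasMid k x b c
      · exact absurd (no_three_mids hk hab hac hbc hxa hxb hxc m1 m2 m3) not_false
      · exact Or.inr (Or.inr ⟨hxb, hxc, hbc, m3⟩)
    · exact Or.inr (Or.inl ⟨hxa, hxc, hac, m2⟩)
  · exact Or.inl ⟨hxa, hxb, hab, m1⟩

/-! ### Bridge between `Tri` and connectivity -/

lemma tri_conn {k : ℕ} {a b c : Fin (k + 2)} (h : Tri k a b c) :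
    ConnOn (SimpleGraph.cycleGraph (k + 2))ᶜ ({a, b, c} : Finset (Fin (k + 2))) := by
  obtain ⟨hab, hac, hbc, hmid⟩ := h
  by_cases h1 : CA k a b
  · -- then ¬ CA a c and ¬ CA b c : center is c
    have h2 : ¬ CA k a c := fun h' => hmid (Or.inl ⟨h1, h'⟩)
    have h3 : ¬ CA k b c := fun h' => hmid (Or.inr (Or.inl ⟨ca_symm h1, h'⟩))
    refine conn_of_star (m := c) (by simp) ?_
    intro v hv
    simp only [Finset.mem_insert, Finset.mem_singleton] at hv
    rcases hv with rfl | rfl | rfl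
    · exact Or.inr ⟨hac.symm, fun h' => h2 (ca_symm h')⟩
    · exact Or.inr ⟨hbc.symm, fun h' => h3 (ca_symm h')⟩
    · exact Or.inl rfl
  · by_cases h2 : CA k a c
    · -- center is b
      have h3 : ¬ CA k b c := fun h' => hmid (Or.inr (Or.inr ⟨ca_symm h2, ca_symm h'⟩))
      refine conn_of_star (m := b) (by simp) ?_
      intro v hv
      simp only [Finset.mem_insert, Finset.mem_singleton] at hv
      rcases hv with rfl | rfl | rfl
      · exact Or.inr ⟨hab.symm, fun h' => h1 (ca_symm h')⟩
      · exact Or.inl rfl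
      · exact Or.inr ⟨hbc, h3⟩
    · -- center is a
      refine conn_of_star (m := a) (by simp) ?_
      intro v hv
      simp only [Finset.mem_insert, Finset.mem_singleton] at hv
      rcases hv with rfl | rfl | rfl
      · exact Or.inl rfl
      · exact Or.inr ⟨hab, h1⟩
      · exact Or.inr ⟨hac, h2⟩

lemma conn_tri {k : ℕ} {a b c : Fin (k + 2)} (hab : a ≠ b) (hac : a ≠ c) (hbc : b ≠ c)
    (h : ConnOn (SimpleGraph.cycleGraph (k + 2))ᶜ ({a, b, c} : Finset (Fin (k + 2)))) :
    Tri k a b c := by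
  refine ⟨hab, hac, hbc, ?_⟩
  rintro (⟨m1, m2⟩ | ⟨m1, m2⟩ | ⟨m1, m2⟩)
  · refine not_connected_of_isolated (m := a) (x := b) (by simp) (by simp) hab.symm ?_ h
    intro v hv
    simp only [Finset.mem_insert, Finset.mem_singleton] at hv
    rcases hv with rfl | rfl | rfl
    · exact fun h' => h'.1 rfl
    · exact fun h' => h'.2 m1
    · exact fun h' => h'.2 m2
  · refine not_connected_of_isolated (m := b) (x := a) (by simp) (by simp) hab ?_ h
    intro v hv
    simp only [Finset.mem_insert, Finset.mem_singleton] at hv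
    rcases hv with rfl | rfl | rfl
    · exact fun h' => h'.2 m1
    · exact fun h' => h'.1 rfl
    · exact fun h' => h'.2 m2
  · refine not_connected_of_isolated (m := c) (x := a) (by simp) (by simp) hac ?_ h
    intro v hv
    simp only [Finset.mem_insert, Finset.mem_singleton] at hv
    rcases hv with rfl | rfl | rfl
    · exact fun h' => h'.2 m1
    · exact fun h' => h'.2 m2
    · exact fun h' => h'.1 rfl

/-! ### `GoodT` -/

def GoodT (k : ℕ) (M : Finset (Fin (k + 2))) : Prop :=
  ∃ W ⊆ M, W.card = 3 ∧ ConnOn (SimpleGraph.cycleGraph (k + 2))ᶜ W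

lemma goodT_mono {k : ℕ} {M M' : Finset (Fin (k + 2))} (h : M ⊆ M') (hg : GoodT k M) :
    GoodT k M' := by
  obtain ⟨W, hW, h3, hc⟩ := hg
  exact ⟨W, hW.trans h, h3, hc⟩

lemma goodT_of_tri {k : ℕ} {a b c : Fin (k + 2)} {M : Finset (Fin (k + 2))}
    (h : Tri k a b c) (ha : a ∈ M) (hb : b ∈ M) (hc : c ∈ M) : GoodT k M := by
  refine ⟨{a, b, c}, ?_, ?_, tri_conn h⟩
  · intro v hv
    simp only [Finset.mem_insert, Finset.mem_singleton] at hv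
    rcases hv with rfl | rfl | rfl <;> assumption
  · exact Finset.card_eq_three.mpr ⟨a, b, c, h.1, h.2.1, h.2.2.1, rfl⟩

lemma goodT_elim {k : ℕ} {M : Finset (Fin (k + 2))} (h : GoodT k M) :
    ∃ a b c, Tri k a b c ∧ a ∈ M ∧ b ∈ M ∧ c ∈ M := by
  obtain ⟨W, hW, h3, hc⟩ := h
  obtain ⟨a, b, c, hab, hac, hbc, rfl⟩ := Finset.card_eq_three.mp h3
  refine ⟨a, b, c, conn_tri hab hac hbc hc, ?_, ?_, ?_⟩ <;>
    [exact hW (by simp); exact hW (by simp); exact hW (by simp)]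

lemma goodT_of_card4 {k : ℕ} (hk : 3 ≤ k) {M : Finset (Fin (k + 2))} (h4 : 4 ≤ M.card) :
    GoodT k M := by
  obtain ⟨t, ht, htc⟩ := Finset.exists_subset_card_eq h4
  obtain ⟨x, hx⟩ : t.Nonempty := Finset.card_pos.mp (by omega)
  have htc' : (t.erase x).card = 3 := by rw [Finset.card_erase_of_mem hx, htc]
  obtain ⟨a, b, c, hab, hac, hbc, habc⟩ := Finset.card_eq_three.mp htc'
  have hxa : x ≠ a := by
    intro e; have : a ∈ t.erase x := habc ▸ by simp
    rw [← e] at this; exact (Finset.notMem_erase x t) this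
  have hxb : x ≠ b := by
    intro e; have : b ∈ t.erase x := habc ▸ by simp
    rw [← e] at this; exact (Finset.notMem_erase x t) this
  have hxc : x ≠ c := by
    intro e; have : c ∈ t.erase x := habc ▸ by simp
    rw [← e] at this; exact (Finset.notMem_erase x t) this
  have hat : a ∈ t := Finset.mem_of_mem_erase (habc ▸ by simp : a ∈ t.erase x)
  have hbt : b ∈ t := Finset.mem_of_mem_erase (habc ▸ by simp : b ∈ t.erase x)
  have hct : c ∈ t := Finset.mem_of_mem_erase (habc ▸ by simp : c ∈ t.erase x)
  rcases exists_tri_of_four hk hab hac hbc hxa hxb hxc with hT | hT | hT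
  · exact goodT_of_tri hT (ht hx) (ht hat) (ht hbt)
  · exact goodT_of_tri hT (ht hx) (ht hat) (ht hct)
  · exact goodT_of_tri hT (ht hx) (ht hbt) (ht hct)

/-! ### Connectivity of induced subgraphs on ≥ 4 vertices -/

lemma conn_big {k : ℕ} (hk : 3 ≤ k) {W : Finset (Fin (k + 2))} (h4 : 4 ≤ W.card) :
    ConnOn (SimpleGraph.cycleGraph (k + 2))ᶜ W := by
  set G := SimpleGraph.cycleGraph (k + 2) with hG
  rw [ConnOn, SimpleGraph.connected_iff]
  have hne : W.Nonempty := Finset.card_pos.mp (by omega)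
  refine ⟨?_, ⟨⟨hne.choose, Finset.mem_coe.mpr hne.choose_spec⟩⟩⟩
  have edge : ∀ {u v : Fin (k + 2)} (hu : u ∈ W) (hv : v ∈ W), u ≠ v → ¬ CA k u v →
      (Gᶜ.induce (W : Set (Fin (k + 2)))).Adj ⟨u, Finset.mem_coe.mpr hu⟩ ⟨v, Finset.mem_coe.mpr hv⟩ :=
    fun hu hv hne hnca => ⟨hne, hnca⟩
  rintro ⟨u, hu⟩ ⟨v, hv⟩
  have hu' : u ∈ W := Finset.mem_coe.mp hu
  have hv' : v ∈ W := Finset.mem_coe.mp hv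
  by_cases huv : u = v
  · subst huv; rfl
  by_cases hA : CA k u v
  · by_cases hw : ∃ w ∈ W, w ≠ u ∧ w ≠ v ∧ ¬ CA k u w ∧ ¬ CA k v w
    · obtain ⟨w, hwW, hwu, hwv, h1, h2⟩ := hw
      exact ((edge hu' hwW (fun e => hwu e.symm) h1).reachable).trans
        ((edge hwW hv' hwv (fun h' => h2 (ca_symm h'))).reachable)
    · push_neg at hw
      have hM : 1 < ((W.erase u).erase v).card := by
        rw [Finset.card_erase_of_mem (Finset.mem_erase.mpr ⟨fun e => huv e.symm, hv'⟩),
          Finset.card_erase_of_mem hu']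
        omega
      obtain ⟨w1, hw1, w2, hw2, hw12⟩ := Finset.one_lt_card.mp hM
      obtain ⟨hw1v, hw1u, hw1W⟩ : w1 ≠ v ∧ w1 ≠ u ∧ w1 ∈ W := by
        obtain ⟨h1, h2⟩ := Finset.mem_erase.mp hw1
        obtain ⟨h3, h4⟩ := Finset.mem_erase.mp h2
        exact ⟨h1, h3, h4⟩
      obtain ⟨hw2v, hw2u, hw2W⟩ : w2 ≠ v ∧ w2 ≠ u ∧ w2 ∈ W := by
        obtain ⟨h1, h2⟩ := Finset.mem_erase.mp hw2
        obtain ⟨h3, h4⟩ := Finset.mem_erase.mp h2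
        exact ⟨h1, h3, h4⟩
      have key : ∀ w1 w2 : Fin (k + 2), w1 ∈ W → w2 ∈ W → w1 ≠ u → w1 ≠ v → w2 ≠ u → w2 ≠ v →
          w1 ≠ w2 → CA k u w1 → CA k v w2 →
          (Gᶜ.induce (W : Set (Fin (k + 2)))).Reachable ⟨u, hu⟩ ⟨v, hv⟩ := by
        intro w1 w2 hw1W hw2W hw1u hw1v hw2u hw2v hw12 hc1 hc2
        have hnuw2 : ¬ CA k u w2 := by
          intro h'
          rcases F2 hA hc1 h' with e | e | e
          · exact hw1v e.symm
          · exact hw2v e.symm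
          · exact hw12 e
        have hnvw1 : ¬ CA k v w1 := by
          intro h'
          rcases F2 (ca_symm hA) h' hc2 with e | e | e
          · exact hw1u e.symm
          · exact hw2u e.symm
          · exact hw12 e
        have hnw12 : ¬ CA k w1 w2 := by
          intro h'
          exact F4 hk (ca_symm hA) hc1 h' (ca_symm hc2) (fun e => hw1v e.symm) (fun e => hw2u e.symm)
        refine ((edge hu' hw2W (fun e => hw2u e.symm) hnuw2).reachable).trans
          (((edge hw2W hw1W (fun e => hw12 e.symm) (fun h' => hnw12 (ca_symm h'))).reachable).trans
          ((edge hw1W hv' hw1v (fun h' => hnvw1 (ca_symm h'))).reachable))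
      have hd : ∀ w ∈ W, w ≠ u → w ≠ v → CA k u w ∨ CA k v w := fun w hW h1 h2 =>
        (em (CA k u w)).elim Or.inl (fun h => Or.inr (hw w hW h1 h2 h))
      rcases hd w1 hw1W hw1u hw1v with h1 | h1 <;> rcases hd w2 hw2W hw2u hw2v with h2 | h2
      · rcases F2 hA h1 h2 with e | e | e
        · exact absurd e.symm hw1v
        · exact absurd e.symm hw2v
        · exact absurd e hw12
      · exact key w1 w2 hw1W hw2W hw1u hw1v hw2u hw2v hw12 h1 h2
      · exact key w2 w1 hw2W hw1W hw2u hw2v hw1u hw1v (fun e => hw12 e.symm) h2 h1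
      · rcases F2 (ca_symm hA) h1 h2 with e | e | e
        · exact absurd e.symm hw1u
        · exact absurd e.symm hw2u
        · exact absurd e hw12
  · exact (edge hu' hv' huv hA).reachable

/-! ### The complexes `Δ(U, S)` for `r = 3` -/

def DeltaT (k : ℕ) (U S : Finset (Fin (k + 2))) : Set (Finset (Fin (k + 2))) :=
  {H | H ⊆ U ∧ GoodT k (S \ H)}

lemma sdiff_insert' {α : Type*} [DecidableEq α] (S H : Finset α) (y : α) :
    S \ insert y H = (S \ H).erase y := by
  ext v
  simp only [Finset.mem_sdiff, Finset.mem_erase, Finset.mem_insert]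
  tauto

lemma shed_main {k : ℕ} (hk : 3 ≤ k) {U S : Finset (Fin (k + 2))} (hUS : U ⊆ S)
    {x : Fin (k + 2)} (hxU : x ∈ U)
    (hGR : ¬ GoodT k (S \ U))
    (H1 : ∀ r1 r2 : Fin (k + 2), r1 ≠ r2 → S \ U = {r1, r2} → ¬ hasMid k x r1 r2)
    (H2 : ∀ s : Fin (k + 2), S \ U = {s} → CA k x s →
      ∀ p q : Fin (k + 2), p ∈ U → q ∈ U → p ≠ q → p ≠ x → q ≠ x → Tri k p q s → False) :
    IsShedding (DeltaT k U S) x := by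
  rintro F ⟨⟨⟨hFU, hFG⟩, hxF⟩, hFmax⟩
  refine ⟨⟨hFU, hFG⟩, ?_⟩
  rintro H ⟨hHU, hHG⟩ hFH
  have hH' : H.erase x ∈ delC (DeltaT k U S) x := by
    refine ⟨⟨(Finset.erase_subset _ _).trans hHU,
      goodT_mono (Finset.sdiff_subset_sdiff (Finset.Subset.refl S) (Finset.erase_subset _ _)) hHG⟩,
      Finset.notMem_erase _ _⟩
  have hFeq := hFmax _ hH' (Finset.subset_erase.mpr ⟨hFH, hxF⟩)
  by_cases hxH : x ∈ H
  swap
  · rw [hFeq, Finset.erase_eq_of_notMem hxH]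
  exfalso
  have hHeq : H = insert x F := by rw [hFeq]; exact (Finset.insert_erase hxH).symm
  set T := S \ F with hTdef
  have hTgood : GoodT k (T.erase x) := by
    rw [← sdiff_insert', ← hHeq]; exact hHG
  have hmax' : ∀ y ∈ U, y ∉ F → y ≠ x → ¬ GoodT k (T.erase y) := by
    intro y hyU hyF hyx hG'
    have hmem : insert y F ∈ delC (DeltaT k U S) x := by
      refine ⟨⟨Finset.insert_subset hyU hFU, by rwa [sdiff_insert']⟩, ?_⟩
      simp only [Finset.mem_insert]
      rintro (rfl | h)
      · exact hyx rfl
      · exact hxF h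
    have := hFmax _ hmem (Finset.subset_insert _ _)
    exact hyF (this ▸ Finset.mem_insert_self y F)
  have hxT : x ∈ T := Finset.mem_sdiff.mpr ⟨hUS hxU, hxF⟩
  have hRT : S \ U ⊆ T := Finset.sdiff_subset_sdiff (Finset.Subset.refl S) hFU
  obtain ⟨a, b, c, hTri, haE, hbE, hcE⟩ := goodT_elim hTgood
  obtain ⟨hab, hac, hbc, -⟩ := id hTri
  have hax : a ≠ x := (Finset.mem_erase.mp haE).1
  have hbx : b ≠ x := (Finset.mem_erase.mp hbE).1
  have hcx : c ≠ x := (Finset.mem_erase.mp hcE).1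
  have haT : a ∈ T := Finset.mem_of_mem_erase haE
  have hbT : b ∈ T := Finset.mem_of_mem_erase hbE
  have hcT : c ∈ T := Finset.mem_of_mem_erase hcE
  have habc_sub : ({a, b, c} : Finset (Fin (k + 2))) ⊆ T.erase x := by
    intro v hv
    simp only [Finset.mem_insert, Finset.mem_singleton] at hv
    rcases hv with rfl | rfl | rfl <;> assumption
  have hcard3 : ({a, b, c} : Finset (Fin (k + 2))).card = 3 :=
    Finset.card_eq_three.mpr ⟨a, b, c, hab, hac, hbc, rfl⟩
  have hT4 : 4 ≤ T.card := by
    have h1 : 3 ≤ (T.erase x).card := hcard3 ▸ Finset.card_le_card habc_sub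
    have h2 : (T.erase x).card = T.card - 1 := Finset.card_erase_of_mem hxT
    have h3 : 1 ≤ T.card := Finset.card_pos.mpr ⟨x, hxT⟩
    omega
  by_cases h5 : 5 ≤ T.card
  · by_cases hy : ∃ y ∈ T, y ∈ U ∧ y ≠ x
    · obtain ⟨y, hyT, hyU, hyx⟩ := hy
      refine hmax' y hyU (Finset.mem_sdiff.mp hyT).2 hyx (goodT_of_card4 hk ?_)
      rw [Finset.card_erase_of_mem hyT]; omega
    · push_neg at hy
      refine hGR (goodT_mono (show T.erase x ⊆ S \ U from ?_) (goodT_of_card4 hk ?_))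
      · intro v hv
        obtain ⟨hvx, hvT⟩ := Finset.mem_erase.mp hv
        refine Finset.mem_sdiff.mpr ⟨(Finset.mem_sdiff.mp hvT).1, fun hvU => hvx (hy v hvT hvU)⟩
      · rw [Finset.card_erase_of_mem hxT]; omega
  · have hTec : (T.erase x).card = 3 := by
      rw [Finset.card_erase_of_mem hxT]; omega
    have hTeq : T.erase x = ({a, b, c} : Finset (Fin (k + 2))) :=
      (Finset.eq_of_subset_of_card_le habc_sub (by omega)).symm
    have hTfull : ∀ v ∈ T, v = x ∨ v = a ∨ v = b ∨ v = c := by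
      intro v hvT
      by_cases hvx : v = x
      · exact Or.inl hvx
      · have : v ∈ T.erase x := Finset.mem_erase.mpr ⟨hvx, hvT⟩
        rw [hTeq] at this
        simp only [Finset.mem_insert, Finset.mem_singleton] at this
        tauto
    have getMid : ∀ y u v : Fin (k + 2), y ∈ U → y ∈ T → u ∈ T → v ∈ T → y ≠ x →
        u ≠ y → v ≠ y → u ≠ v → x ≠ u → x ≠ v → hasMid k x u v := by
      intro y u v hyU hyT huT hvT hyx huy hvy huv hxu hxv
      by_contra hmid
      refine hmax' y hyU (Finset.mem_sdiff.mp hyT).2 hyx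
        (goodT_of_tri ⟨hxu, hxv, huv, hmid⟩ (Finset.mem_erase.mpr ⟨fun e => hyx e.symm, hxT⟩)
          (Finset.mem_erase.mpr ⟨huy, huT⟩) (Finset.mem_erase.mpr ⟨hvy, hvT⟩))
    have hmemS : ∀ v ∈ T, v ∈ S := fun v hv => (Finset.mem_sdiff.mp hv).1
    have hRsub : ∀ v, v ∈ S \ U → (v = a ∨ v = b ∨ v = c) := by
      intro v hv
      have hvT := hRT hv
      have hvnU := (Finset.mem_sdiff.mp hv).2
      rcases hTfull v hvT with rfl | h | h | h
      · exact absurd hxU hvnU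
      · tauto
      · tauto
      · tauto
    by_cases haU : a ∈ U <;> by_cases hbU : b ∈ U <;> by_cases hcU : c ∈ U
    · -- all of a b c in U
      have m_bc := getMid a b c haU haT hbT hcT hax hab.symm hac.symm hbc hbx.symm hcx.symm
      have m_ac := getMid b a c hbU hbT haT hcT hbx hab hbc.symm hac hax.symm hcx.symm
      have m_ab := getMid c a b hcU hcT haT hbT hcx hac hbc hab hax.symm hbx.symm
      exact no_three_mids hk hab hac hbc hax.symm hbx.symm hcx.symm m_ab m_ac m_bc
    · -- a, b ∈ U, c ∉ U
      have hcR : c ∈ S \ U := Finset.mem_sdiff.mpr ⟨hmemS c hcT, hcU⟩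
      have hReq : S \ U = {c} := by
        apply Finset.Subset.antisymm
        · intro v hv
          rcases hRsub v hv with rfl | rfl | rfl
          · exact absurd haU (Finset.mem_sdiff.mp hv).2
          · exact absurd hbU (Finset.mem_sdiff.mp hv).2
          · exact Finset.mem_singleton_self _
        · intro v hv
          rw [Finset.mem_singleton] at hv
          exact hv ▸ hcR
      have m_bc := getMid a b c haU haT hbT hcT hax hab.symm hac.symm hbc hbx.symm hcx.symm
      have m_ac := getMid b a c hbU hbT haT hcT hbx hab hbc.symm hac hax.symm hcx.symm
      by_cases hxc : CA k x c
      · exact H2 c hReq hxc a b haU hbU hab hax.symm.symm hbx.symm.symm hTri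
      · have hCbc : CA k b c := by
          rcases m_bc with ⟨-, h⟩ | ⟨-, h⟩ | ⟨h, -⟩
          · exact absurd h hxc
          · exact h
          · exact absurd (ca_symm h) hxc
        have hCac : CA k a c := by
          rcases m_ac with ⟨-, h⟩ | ⟨-, h⟩ | ⟨h, -⟩
          · exact absurd h hxc
          · exact h
          · exact absurd (ca_symm h) hxc
        exact hTri.2.2.2 (Or.inr (Or.inr ⟨ca_symm hCac, ca_symm hCbc⟩))
    · -- a, c ∈ U, b ∉ U
      have hbR : b ∈ S \ U := Finset.mem_sdiff.mpr ⟨hmemS b hbT, hbU⟩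
      have hReq : S \ U = {b} := by
        apply Finset.Subset.antisymm
        · intro v hv
          rcases hRsub v hv with rfl | rfl | rfl
          · exact absurd haU (Finset.mem_sdiff.mp hv).2
          · exact Finset.mem_singleton_self _
          · exact absurd hcU (Finset.mem_sdiff.mp hv).2
        · intro v hv
          rw [Finset.mem_singleton] at hv
          exact hv ▸ hbR
      have m_bc := getMid a b c haU haT hbT hcT hax hab.symm hac.symm hbc hbx.symm hcx.symm
      have m_ab := getMid c a b hcU hcT haT hbT hcx hac hbc hab hax.symm hbx.symm
      by_cases hxb : CA k x b
      · exact H2 b hReq hxb a c haU hcU hac hax hcx (tri_swap hTri)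
      · have hCcb : CA k c b := by
          rcases m_bc with ⟨h, -⟩ | ⟨h, -⟩ | ⟨-, h⟩
          · exact absurd h hxb
          · exact absurd (ca_symm h) hxb
          · exact h
        have hCab : CA k a b := by
          rcases m_ab with ⟨-, h⟩ | ⟨-, h⟩ | ⟨h, -⟩
          · exact absurd h hxb
          · exact h
          · exact absurd (ca_symm h) hxb
        exact hTri.2.2.2 (Or.inr (Or.inl ⟨ca_symm hCab, ca_symm hCcb⟩))
    · -- a ∈ U, b c ∉ U
      have hbR : b ∈ S \ U := Finset.mem_sdiff.mpr ⟨hmemS b hbT, hbU⟩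
      have hcR : c ∈ S \ U := Finset.mem_sdiff.mpr ⟨hmemS c hcT, hcU⟩
      have hReq : S \ U = {b, c} := by
        apply Finset.Subset.antisymm
        · intro v hv
          rcases hRsub v hv with rfl | rfl | rfl
          · exact absurd haU (Finset.mem_sdiff.mp hv).2
          · simp
          · simp
        · intro v hv
          simp only [Finset.mem_insert, Finset.mem_singleton] at hv
          rcases hv with rfl | rfl
          · exact hbR
          · exact hcR
      have m_bc := getMid a b c haU haT hbT hcT hax hab.symm hac.symm hbc hbx.symm hcx.symm
      exact H1 b c hbc hReq m_bc
    · -- b, c ∈ U, a ∉ U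
      have haR : a ∈ S \ U := Finset.mem_sdiff.mpr ⟨hmemS a haT, haU⟩
      have hReq : S \ U = {a} := by
        apply Finset.Subset.antisymm
        · intro v hv
          rcases hRsub v hv with rfl | rfl | rfl
          · exact Finset.mem_singleton_self _
          · exact absurd hbU (Finset.mem_sdiff.mp hv).2
          · exact absurd hcU (Finset.mem_sdiff.mp hv).2
        · intro v hv
          rw [Finset.mem_singleton] at hv
          exact hv ▸ haR
      have m_ac := getMid b a c hbU hbT haT hcT hbx hab hbc.symm hac hax.symm hcx.symm
      have m_ab := getMid c a b hcU hcT haT hbT hcx hac hbc hab hax.symm hbx.symm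
      by_cases hxa : CA k x a
      · exact H2 a hReq hxa b c hbU hcU hbc hbx hcx (tri_rot hTri)
      · have hCca : CA k c a := by
          rcases m_ac with ⟨h, -⟩ | ⟨h, -⟩ | ⟨-, h⟩
          · exact absurd h hxa
          · exact absurd (ca_symm h) hxa
          · exact h
        have hCba : CA k b a := by
          rcases m_ab with ⟨h, -⟩ | ⟨h, -⟩ | ⟨-, h⟩
          · exact absurd h hxa
          · exact absurd (ca_symm h) hxa
          · exact h
        exact hTri.2.2.2 (Or.inl ⟨ca_symm hCba, ca_symm hCca⟩)
    · -- b ∈ U, a c ∉ U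
      have haR : a ∈ S \ U := Finset.mem_sdiff.mpr ⟨hmemS a haT, haU⟩
      have hcR : c ∈ S \ U := Finset.mem_sdiff.mpr ⟨hmemS c hcT, hcU⟩
      have hReq : S \ U = {a, c} := by
        apply Finset.Subset.antisymm
        · intro v hv
          rcases hRsub v hv with rfl | rfl | rfl
          · simp
          · exact absurd hbU (Finset.mem_sdiff.mp hv).2
          · simp
        · intro v hv
          simp only [Finset.mem_insert, Finset.mem_singleton] at hv
          rcases hv with rfl | rfl
          · exact haR
          · exact hcR
      have m_ac := getMid b a c hbU hbT haT hcT hbx hab hbc.symm hac hax.symm hcx.symm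
      exact H1 a c hac hReq m_ac
    · -- c ∈ U, a b ∉ U
      have haR : a ∈ S \ U := Finset.mem_sdiff.mpr ⟨hmemS a haT, haU⟩
      have hbR : b ∈ S \ U := Finset.mem_sdiff.mpr ⟨hmemS b hbT, hbU⟩
      have hReq : S \ U = {a, b} := by
        apply Finset.Subset.antisymm
        · intro v hv
          rcases hRsub v hv with rfl | rfl | rfl
          · simp
          · simp
          · exact absurd hcU (Finset.mem_sdiff.mp hv).2
        · intro v hv
          simp only [Finset.mem_insert, Finset.mem_singleton] at hv
          rcases hv with rfl | rfl
          · exact haR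
          · exact hbR
      have m_ab := getMid c a b hcU hcT haT hbT hcx hac hbc hab hax.symm hbx.symm
      exact H1 a b hab hReq m_ab
    · -- none in U
      have haR : a ∈ S \ U := Finset.mem_sdiff.mpr ⟨hmemS a haT, haU⟩
      have hbR : b ∈ S \ U := Finset.mem_sdiff.mpr ⟨hmemS b hbT, hbU⟩
      have hcR : c ∈ S \ U := Finset.mem_sdiff.mpr ⟨hmemS c hcT, hcU⟩
      exact hGR (goodT_of_tri hTri haR hbR hcR)


lemma deltaT_del {k : ℕ} (U S : Finset (Fin (k + 2))) (x : Fin (k + 2)) :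
    delC (DeltaT k U S) x = DeltaT k (U.erase x) S := by
  ext H
  simp only [delC, DeltaT, Set.mem_setOf_eq, Finset.subset_erase]
  tauto

lemma erase_sdiff_comm' {α : Type*} [DecidableEq α] (S H : Finset α) (x : α) :
    (S.erase x) \ H = (S \ H).erase x := by
  ext v
  simp only [Finset.mem_sdiff, Finset.mem_erase]
  tauto

lemma deltaT_link {k : ℕ} {U S : Finset (Fin (k + 2))} {x : Fin (k + 2)} (hxU : x ∈ U) :
    linkC (DeltaT k U S) x = DeltaT k (U.erase x) (S.erase x) := by
  ext H
  constructor
  · rintro ⟨⟨hHU, hHG⟩, hxH, hiU, hiG⟩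
    refine ⟨Finset.subset_erase.mpr ⟨hHU, hxH⟩, ?_⟩
    rw [erase_sdiff_comm', ← sdiff_insert']
    exact hiG
  · rintro ⟨hHU', hG'⟩
    obtain ⟨hHU, hxH⟩ := Finset.subset_erase.mp hHU'
    rw [erase_sdiff_comm', ← sdiff_insert'] at hG'
    refine ⟨⟨hHU, goodT_mono (Finset.sdiff_subset_sdiff (Finset.Subset.refl S)
      (Finset.subset_insert _ _)) hG'⟩, hxH, Finset.insert_subset hxU hHU, hG'⟩

lemma deltaT_pre {k : ℕ} {U S : Finset (Fin (k + 2))} {y : Fin (k + 2)} (hyU : y ∈ U)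
    (hny : ¬ GoodT k (S.erase y)) : DeltaT k U S = DeltaT k (U.erase y) S := by
  ext H
  constructor
  · rintro ⟨hHU, hG⟩
    have hyH : y ∉ H := by
      intro hyH
      refine hny (goodT_mono ?_ hG)
      intro v hv
      obtain ⟨hvS, hvH⟩ := Finset.mem_sdiff.mp hv
      exact Finset.mem_erase.mpr ⟨fun e => hvH (e ▸ hyH), hvS⟩
    exact ⟨Finset.subset_erase.mpr ⟨hHU, hyH⟩, hG⟩
  · rintro ⟨hHU, hG⟩
    exact ⟨hHU.trans (Finset.erase_subset _ _), hG⟩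

lemma pigeon2 {α : Type*} {a b c r1 r2 : α} (hab : a ≠ b) (hac : a ≠ c) (hbc : b ≠ c)
    (ha : a = r1 ∨ a = r2) (hb : b = r1 ∨ b = r2) (hc : c = r1 ∨ c = r2) : False := by
  rcases ha with rfl | rfl <;> rcases hb with rfl | rfl <;> rcases hc with rfl | rfl <;>
    first
      | exact hab rfl
      | exact hac rfl
      | exact hbc rfl

lemma three_distinct {α : Type*} [DecidableEq α] {U : Finset α} (h : 3 ≤ U.card) :
    ∃ a b c, a ∈ U ∧ b ∈ U ∧ c ∈ U ∧ a ≠ b ∧ a ≠ c ∧ b ≠ c := by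
  obtain ⟨t, ht, htc⟩ := Finset.exists_subset_card_eq h
  obtain ⟨a, b, c, hab, hac, hbc, rfl⟩ := Finset.card_eq_three.mp htc
  exact ⟨a, b, c, ht (by simp), ht (by simp), ht (by simp), hab, hac, hbc⟩


lemma deltaT_vd {k : ℕ} (hk : 3 ≤ k) :
    ∀ (N : ℕ) (U S : Finset (Fin (k + 2))), U.card ≤ N → U ⊆ S → VD (DeltaT k U S) := by
  have simplex_case : ∀ (U S : Finset (Fin (k + 2))), U ⊆ S → GoodT k (S \ U) →
      VD (DeltaT k U S) := by
    intro U S hUS hGR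
    refine vd_congr ?_ (VD.simplex U)
    ext H
    simp only [DeltaT, Set.mem_setOf_eq, and_iff_left_iff_imp]
    intro hHU
    exact goodT_mono (Finset.sdiff_subset_sdiff (Finset.Subset.refl S) hHU) hGR
  have void_case : ∀ (U S : Finset (Fin (k + 2))), ¬ GoodT k S → VD (DeltaT k U S) := by
    intro U S hGS
    refine vd_congr ?_ VD.void
    ext H
    simp only [DeltaT, Set.mem_setOf_eq, Set.mem_empty_iff_false, iff_false, not_and]
    intro _ hG
    exact hGS (goodT_mono Finset.sdiff_subset hG)
  intro N
  induction N with
  | zero =>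
    intro U S hc hUS
    have hU : U = ∅ := Finset.card_eq_zero.mp (by omega)
    subst hU
    by_cases hGS : GoodT k S
    · exact simplex_case _ _ (Finset.empty_subset _) (by rwa [Finset.sdiff_empty])
    · exact void_case _ _ hGS
  | succ N ih =>
    intro U S hc hUS
    by_cases hGR : GoodT k (S \ U)
    · exact simplex_case _ _ hUS hGR
    by_cases hGS : GoodT k S
    swap
    · exact void_case _ _ hGS
    have hUne : U.Nonempty := by
      rcases Finset.eq_empty_or_nonempty U with rfl | h
      · rw [Finset.sdiff_empty] at hGR; exact absurd hGS hGR
      · exact h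
    by_cases hpre : ∃ y ∈ U, ¬ GoodT k (S.erase y)
    · obtain ⟨y, hyU, hny⟩ := hpre
      rw [deltaT_pre hyU hny]
      exact ih (U.erase y) S (by rw [Finset.card_erase_of_mem hyU]; omega)
        ((Finset.erase_subset _ _).trans hUS)
    push_neg at hpre
    have main : ∀ x ∈ U, (∀ r1 r2 : Fin (k + 2), r1 ≠ r2 → S \ U = {r1, r2} →
        ¬ hasMid k x r1 r2) → (∀ s : Fin (k + 2), S \ U = {s} → CA k x s →
        ∀ p q : Fin (k + 2), p ∈ U → q ∈ U → p ≠ q → p ≠ x → q ≠ x → Tri k p q s → False) →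
        VD (DeltaT k U S) := by
      intro x hxU Hx1 Hx2
      refine VD.step _ x ⟨Finset.singleton_subset_iff.mpr hxU, ?_⟩
        (shed_main hk hUS hxU hGR Hx1 Hx2) ?_ ?_
      · rw [Finset.sdiff_singleton_eq_erase]
        exact hpre x hxU
      · rw [deltaT_link hxU]
        exact ih _ _ (by rw [Finset.card_erase_of_mem hxU]; omega)
          (Finset.erase_subset_erase _ hUS)
      · rw [deltaT_del]
        exact ih _ _ (by rw [Finset.card_erase_of_mem hxU]; omega)
          ((Finset.erase_subset _ _).trans hUS)
    have hR3 : (S \ U).card ≤ 3 := by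
      by_contra h
      exact hGR (goodT_of_card4 hk (by omega))
    have hnotU : ∀ v ∈ S \ U, v ∉ U := fun v hv => (Finset.mem_sdiff.mp hv).2
    have hcases : (S \ U).card = 0 ∨ (S \ U).card = 1 ∨ (S \ U).card = 2 ∨ (S \ U).card = 3 := by
      omega
    rcases hcases with hRc | hRc | hRc | hRc
    · -- R empty
      obtain ⟨x0, hx0⟩ := hUne
      have hRe : S \ U = ∅ := Finset.card_eq_zero.mp hRc
      refine main x0 hx0 ?_ ?_
      · intro r1 r2 hne heq
        rw [heq] at hRe
        exact absurd (Finset.mem_insert_self r1 {r2}) (by rw [hRe]; simp)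
      · intro s heq
        rw [heq] at hRe
        exact absurd (Finset.mem_singleton_self s) (by rw [hRe]; simp)
    · -- R = {r}
      obtain ⟨r, hRr⟩ := Finset.card_eq_one.mp hRc
      have H1any : ∀ x : Fin (k + 2), ∀ r1 r2 : Fin (k + 2), r1 ≠ r2 → S \ U = {r1, r2} →
          ¬ hasMid k x r1 r2 := by
        intro x r1 r2 hne heq
        rw [hRr] at heq
        have h1 : r1 ∈ ({r} : Finset (Fin (k + 2))) := by rw [heq]; simp
        have h2 : r2 ∈ ({r} : Finset (Fin (k + 2))) := by rw [heq]; simp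
        rw [Finset.mem_singleton] at h1 h2
        exact absurd (h1.trans h2.symm) hne
      by_cases hex : ∃ x ∈ U, ¬ CA k x r
      · obtain ⟨x, hxU, hxr⟩ := hex
        refine main x hxU (H1any x) ?_
        intro s heq hxs p q hp hq hpq hpx hqx htri
        rw [hRr] at heq
        have hsr : s = r := by
          have h1 : s ∈ ({r} : Finset (Fin (k + 2))) := by rw [heq]; simp
          rwa [Finset.mem_singleton] at h1
        exact absurd (hsr ▸ hxs) hxr
      · push_neg at hex
        obtain ⟨x0, hx0⟩ := hUne
        refine main x0 hx0 (H1any x0) ?_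
        intro s heq hxs p q hp hq hpq hpx hqx htri
        have hsr : s = r := by
          have h1 : s ∈ ({r} : Finset (Fin (k + 2))) := by rw [← hRr, heq]; simp
          rwa [Finset.mem_singleton] at h1
        subst hsr
        rcases F2 (ca_symm (hex p hp)) (ca_symm (hex q hq)) (ca_symm (hex x0 hx0)) with e | e | e
        · exact hpq e
        · exact hpx e
        · exact hqx e
    · -- R = {r1, r2}
      obtain ⟨r1, r2, hr12, hRr⟩ := Finset.card_eq_two.mp hRc
      have hr1R : r1 ∈ S \ U := by rw [hRr]; simp
      have hr2R : r2 ∈ S \ U := by rw [hRr]; simp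
      have hr1U : r1 ∉ U := hnotU _ hr1R
      have hr2U : r2 ∉ U := hnotU _ hr2R
      by_cases hex : ∃ x ∈ U, ¬ hasMid k x r1 r2
      · obtain ⟨x, hxU, hxm⟩ := hex
        refine main x hxU ?_ ?_
        · intro r1' r2' hne' heq
          rw [hRr] at heq
          have h1 : r1' ∈ ({r1, r2} : Finset (Fin (k + 2))) := by rw [heq]; simp
          have h2 : r2' ∈ ({r1, r2} : Finset (Fin (k + 2))) := by rw [heq]; simp
          simp only [Finset.mem_insert, Finset.mem_singleton] at h1 h2
          rcases h1 with rfl | rfl <;> rcases h2 with rfl | rfl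
          · exact absurd rfl hne'
          · exact hxm
          · exact fun hm => hxm (hasMid_swap hm)
          · exact absurd rfl hne'
        · intro s heq _ p q hp hq hpq hpx hqx htri
          rw [hRr] at heq
          have h1 : r1 ∈ ({s} : Finset (Fin (k + 2))) := by rw [← heq]; simp
          have h2 : r2 ∈ ({s} : Finset (Fin (k + 2))) := by rw [← heq]; simp
          rw [Finset.mem_singleton] at h1 h2
          exact hr12 (h1.trans h2.symm)
      · push_neg at hex
        exfalso
        by_cases h12 : CA k r1 r2
        · have hadj : ∀ x ∈ U, CA k r1 x ∨ CA k r2 x := by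
            intro x hx
            rcases hex x hx with ⟨h1', h2'⟩ | ⟨h1', -⟩ | ⟨h1', -⟩
            · exact absurd (F3 hk h1' h12 h2') not_false
            · exact Or.inl h1'
            · exact Or.inr h1'
          have hU2 : U.card ≤ 2 := by
            by_contra h
            push_neg at h
            obtain ⟨a, b, c, ha, hb, hc, hab, hac, hbc⟩ := three_distinct (U := U) (by omega)
            have hna : ∀ v ∈ U, v ≠ r1 ∧ v ≠ r2 := fun v hv =>
              ⟨fun e => hr1U (e ▸ hv), fun e => hr2U (e ▸ hv)⟩
            rcases hadj a ha with h1 | h1 <;> rcases hadj b hb with h2 | h2 <;>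
              rcases hadj c hc with h3 | h3
            · rcases F2 h1 h2 h12 with e | e | e
              · exact hab e
              · exact (hna a ha).2 e
              · exact (hna b hb).2 e
            · rcases F2 h1 h2 h12 with e | e | e
              · exact hab e
              · exact (hna a ha).2 e
              · exact (hna b hb).2 e
            · rcases F2 h1 h3 h12 with e | e | e
              · exact hac e
              · exact (hna a ha).2 e
              · exact (hna c hc).2 e
            · rcases F2 h2 h3 (ca_symm h12) with e | e | e
              · exact hbc e
              · exact (hna b hb).1 e
              · exact (hna c hc).1 e
            · rcases F2 h2 h3 h12 with e | e | e
              · exact hbc e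
              · exact (hna b hb).2 e
              · exact (hna c hc).2 e
            · rcases F2 h1 h3 (ca_symm h12) with e | e | e
              · exact hac e
              · exact (hna a ha).1 e
              · exact (hna c hc).1 e
            · rcases F2 h1 h2 (ca_symm h12) with e | e | e
              · exact hab e
              · exact (hna a ha).1 e
              · exact (hna b hb).1 e
            · rcases F2 h1 h2 (ca_symm h12) with e | e | e
              · exact hab e
              · exact (hna a ha).1 e
              · exact (hna b hb).1 e
          obtain ⟨x0, hx0⟩ := hUne
          obtain ⟨a, b, c, hT, haM, hbM, hcM⟩ := goodT_elim (hpre x0 hx0)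
          have hmem : ∀ v ∈ S.erase x0, v = r1 ∨ v = r2 ∨ (v ∈ U ∧ v ≠ x0) := by
            intro v hv
            obtain ⟨hvx, hvS⟩ := Finset.mem_erase.mp hv
            by_cases hvU : v ∈ U
            · exact Or.inr (Or.inr ⟨hvU, hvx⟩)
            · have : v ∈ S \ U := Finset.mem_sdiff.mpr ⟨hvS, hvU⟩
              rw [hRr] at this
              simp only [Finset.mem_insert, Finset.mem_singleton] at this
              tauto
          have hUcase : U.card = 1 ∨ U.card = 2 := by
            have : 1 ≤ U.card := Finset.card_pos.mpr ⟨x0, hx0⟩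
            omega
          rcases hUcase with hU1 | hU1
          · -- U = {x0}
            have hUeq : U = {x0} := by
              obtain ⟨y, hy⟩ := Finset.card_eq_one.mp hU1
              rw [hy] at hx0
              rw [Finset.mem_singleton] at hx0
              rw [hy, hx0]
            have hform : ∀ v ∈ S.erase x0, v = r1 ∨ v = r2 := by
              intro v hv
              rcases hmem v hv with h | h | ⟨h1, h2⟩
              · exact Or.inl h
              · exact Or.inr h
              · rw [hUeq, Finset.mem_singleton] at h1
                exact absurd h1 h2
            exact pigeon2 hT.1 hT.2.1 hT.2.2.1 (hform a haM) (hform b hbM) (hform c hcM)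
          · -- U = {x0, x1}
            obtain ⟨u, v, huv, hUeq⟩ := Finset.card_eq_two.mp hU1
            have hx0mem : x0 = u ∨ x0 = v := by
              rw [hUeq] at hx0
              simpa using hx0
            obtain ⟨x1, hx1U, hx1ne⟩ : ∃ x1, x1 ∈ U ∧ x1 ≠ x0 := by
              rcases hx0mem with rfl | rfl
              · exact ⟨v, by rw [hUeq]; simp, fun e => huv e.symm⟩
              · exact ⟨u, by rw [hUeq]; simp, huv⟩
            have hform : ∀ w ∈ S.erase x0, w = x1 ∨ w = r1 ∨ w = r2 := by
              intro w hw
              rcases hmem w hw with h | h | ⟨h1, h2⟩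
              · exact Or.inr (Or.inl h)
              · exact Or.inr (Or.inr h)
              · left
                rw [hUeq] at h1 hx1U
                simp only [Finset.mem_insert, Finset.mem_singleton] at h1 hx1U
                rcases hx0mem with rfl | rfl
                · rcases h1 with rfl | rfl
                  · exact absurd rfl h2
                  · rcases hx1U with rfl | rfl
                    · exact absurd rfl hx1ne
                    · rfl
                · rcases h1 with rfl | rfl
                  · rcases hx1U with rfl | rfl
                    · rfl
                    · exact absurd rfl hx1ne
                  · exact absurd rfl h2
            have hTri' : Tri k x1 r1 r2 :=
              tri_transfer hT (hform a haM) (hform b hbM) (hform c hcM)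
            exact hTri'.2.2.2 (hex x1 hx1U)
        · -- ¬ CA r1 r2
          have hadj : ∀ x ∈ U, CA k x r1 ∧ CA k x r2 := by
            intro x hx
            rcases hex x hx with h | ⟨-, h2'⟩ | ⟨-, h2'⟩
            · exact h
            · exact absurd h2' h12
            · exact absurd (ca_symm h2') h12
          have hU1 : U.card = 1 := by
            have h1 : 1 ≤ U.card := Finset.card_pos.mpr hUne
            by_contra h
            have h2 : 1 < U.card := by omega
            obtain ⟨a, ha, b, hb, hab⟩ := Finset.one_lt_card.mp h2
            exact F4 hk (hadj a ha).1 (ca_symm (hadj b hb).1) (hadj b hb).2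
              (ca_symm (hadj a ha).2) hab hr12
          obtain ⟨x0, hx0⟩ := hUne
          have hUeq : U = {x0} := by
            obtain ⟨y, hy⟩ := Finset.card_eq_one.mp hU1
            rw [hy] at hx0
            rw [Finset.mem_singleton] at hx0
            rw [hy, hx0]
          obtain ⟨a, b, c, hT, haM, hbM, hcM⟩ := goodT_elim (hpre x0 hx0)
          have hform : ∀ w ∈ S.erase x0, w = r1 ∨ w = r2 := by
            intro w hw
            obtain ⟨hwx, hwS⟩ := Finset.mem_erase.mp hw
            by_cases hwU : w ∈ U
            · rw [hUeq, Finset.mem_singleton] at hwU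
              exact absurd hwU hwx
            · have : w ∈ S \ U := Finset.mem_sdiff.mpr ⟨hwS, hwU⟩
              rw [hRr] at this
              simpa using this
          exact pigeon2 hT.1 hT.2.1 hT.2.2.1 (hform a haM) (hform b hbM) (hform c hcM)
    · -- R card 3
      obtain ⟨x0, hx0⟩ := hUne
      refine main x0 hx0 ?_ ?_
      · intro r1 r2 hne heq
        have := congrArg Finset.card heq
        rw [hRc, Finset.card_pair hne] at this
        omega
      · intro s heq
        have := congrArg Finset.card heq
        rw [hRc, Finset.card_singleton] at this
        omega

lemma sigmaG_empty {G : SimpleGraph V} {r : ℕ}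
    (h : ∀ W : Finset V, W.card = r → ¬ ConnOn G W) :
    SigmaG G Finset.univ r = ∅ := by
  ext H
  simp only [SigmaG, ConR, Set.mem_setOf_eq, Set.mem_empty_iff_false, iff_false]
  rintro ⟨W, ⟨-, hc, hconn⟩, -⟩
  exact h W hc hconn

lemma n3_empty : ∀ W : Finset (Fin 3), W.card = 3 → ¬ ConnOn (SimpleGraph.cycleGraph 3)ᶜ W := by
  intro W hW
  have hWu : W = Finset.univ := Finset.eq_univ_of_card W (by simp [hW])
  subst hWu
  refine not_connected_of_isolated (m := 0) (x := 1) (Finset.mem_univ _) (Finset.mem_univ _)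
    (by decide) ?_
  intro v _
  revert v
  decide

lemma n4_empty3 : ∀ W : Finset (Fin 4), W.card = 3 → ¬ ConnOn (SimpleGraph.cycleGraph 4)ᶜ W := by
  intro W hW
  have hWc : (Finset.univ \ W).card = 1 := by
    rw [Finset.card_sdiff_of_subset (Finset.subset_univ W), hW]
    simp
  obtain ⟨t, ht⟩ := Finset.card_eq_one.mp hWc
  have hmem : ∀ v : Fin 4, v ≠ t → v ∈ W := by
    intro v hv
    by_contra hvW
    have : v ∈ Finset.univ \ W := Finset.mem_sdiff.mpr ⟨Finset.mem_univ _, hvW⟩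
    rw [ht, Finset.mem_singleton] at this
    exact hv this
  have h1 : ∀ s : Fin 4, s + 1 ≠ s := by decide
  have h2 : ∀ s : Fin 4, s + 2 ≠ s := by decide
  have h12 : ∀ s : Fin 4, s + 1 ≠ s + 2 := by decide
  have key : ∀ s u : Fin 4, u ≠ s → ¬ (SimpleGraph.cycleGraph 4)ᶜ.Adj (s + 2) u := by decide
  refine not_connected_of_isolated (m := t + 2) (x := t + 1) (hmem _ (h2 t)) (hmem _ (h1 t))
    (h12 t) ?_
  intro v hv
  have hvt : v ≠ t := by
    intro e
    subst e
    have : v ∈ Finset.univ \ W := by rw [ht]; simp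
    exact (Finset.mem_sdiff.mp this).2 hv
  exact key t v hvt

lemma n4_empty4 : ∀ W : Finset (Fin 4), W.card = 4 → ¬ ConnOn (SimpleGraph.cycleGraph 4)ᶜ W := by
  intro W hW
  have hWu : W = Finset.univ := Finset.eq_univ_of_card W (by simp [hW])
  subst hWu
  intro h
  have hreach := h.preconnected ⟨0, Finset.mem_coe.mpr (Finset.mem_univ _)⟩
    ⟨1, Finset.mem_coe.mpr (Finset.mem_univ _)⟩
  have key : ∀ a b : Fin 4, (SimpleGraph.cycleGraph 4)ᶜ.Adj a b →
      (a = 0 ∨ a = 2) → (b = 0 ∨ b = 2) := by decide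
  have := reach_inv (G := (SimpleGraph.cycleGraph 4)ᶜ.induce
      ((Finset.univ : Finset (Fin 4)) : Set (Fin 4)))
    (fun w => w.1 = 0 ∨ w.1 = 2)
    (fun a b hab ha => key a.1 b.1 hab ha) hreach (Or.inl rfl)
  simp at this

lemma sigma_skel {k : ℕ} (hk : 3 ≤ k) {r : ℕ} (h4 : 4 ≤ r) (hrn : r ≤ k + 2) :
    VD (SigmaG (SimpleGraph.cycleGraph (k + 2))ᶜ Finset.univ r) := by
  have hcu : (Finset.univ : Finset (Fin (k + 2))).card = k + 2 := by simp
  refine vd_congr (show _ = {H : Finset (Fin (k+2)) | H ⊆ Finset.univ ∧ H.card ≤ (k + 2) - r}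
    from ?_) (vd_skeleton _ _)
  ext H
  simp only [SigmaG, ConR, Set.mem_setOf_eq]
  constructor
  · rintro ⟨W, ⟨hWu, hWr, -⟩, hH⟩
    refine ⟨Finset.subset_univ _, ?_⟩
    have := Finset.card_le_card hH
    rw [Finset.card_sdiff_of_subset hWu, hcu, hWr] at this
    exact this
  · rintro ⟨-, hcard⟩
    have hHle : H.card ≤ k + 2 := by
      have := Finset.card_le_univ H
      simpa using this
    have hsd : (Finset.univ \ H).card = (k + 2) - H.card := by
      rw [Finset.card_sdiff_of_subset (Finset.subset_univ H), hcu]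
    obtain ⟨W, hWsub, hWr⟩ := Finset.exists_subset_card_eq (s := Finset.univ \ H) (n := r) (by omega)
    refine ⟨W, ⟨Finset.subset_univ _, hWr, conn_big hk (by omega)⟩, ?_⟩
    intro v hv
    exact Finset.mem_sdiff.mpr ⟨Finset.mem_univ _,
      fun hvW => (Finset.mem_sdiff.mp (hWsub hvW)).2 hv⟩

lemma sigma3_eq {k : ℕ} :
    SigmaG (SimpleGraph.cycleGraph (k + 2))ᶜ Finset.univ 3 = DeltaT k Finset.univ Finset.univ := by
  ext H
  simp only [SigmaG, ConR, DeltaT, GoodT, Set.mem_setOf_eq]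
  constructor
  · rintro ⟨W, ⟨-, hW3, hWc⟩, hH⟩
    refine ⟨Finset.subset_univ _, W, ?_, hW3, hWc⟩
    intro w hw
    exact Finset.mem_sdiff.mpr ⟨Finset.mem_univ _,
      fun hwH => (Finset.mem_sdiff.mp (hH hwH)).2 hw⟩
  · rintro ⟨-, W, hWsub, hW3, hWc⟩
    refine ⟨W, ⟨Finset.subset_univ _, hW3, hWc⟩, ?_⟩
    intro v hv
    exact Finset.mem_sdiff.mpr ⟨Finset.mem_univ _,
      fun hvW => (Finset.mem_sdiff.mp (hWsub hvW)).2 hv⟩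


/-- For `n ≥ 3` and `r ≥ 3`, the complex `Σ_r(C_nᶜ)` of the complement
of the cycle graph `C_n` is vertex decomposable. -/
theorem sigma_cycle_compl_vd (n r : ℕ) (hn : 3 ≤ n) (hr : 3 ≤ r) :
    VD (SigmaG (SimpleGraph.cycleGraph n)ᶜ Finset.univ r) := by
  obtain ⟨k, rfl⟩ : ∃ k, n = k + 2 := ⟨n - 2, by omega⟩
  by_cases hrn : k + 2 < r
  · refine vd_congr (sigmaG_empty ?_) VD.void
    intro W hW _
    have := Finset.card_le_univ W
    simp only [Finset.card_univ, Fintype.card_fin] at this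
    omega
  push_neg at hrn
  rcases Nat.lt_or_ge k 3 with hk | hk
  · interval_cases k
    · omega
    · have hr3 : r = 3 := by omega
      subst hr3
      exact vd_congr (sigmaG_empty n3_empty) VD.void
    · interval_cases r
      · exact vd_congr (sigmaG_empty n4_empty3) VD.void
      · exact vd_congr (sigmaG_empty n4_empty4) VD.void
  · rcases Nat.lt_or_ge r 4 with hr4 | hr4
    · have hr3 : r = 3 := by omega
      subst hr3
      exact vd_congr sigma3_eq
        (deltaT_vd hk (Finset.univ.card) Finset.univ Finset.univ le_rfl
          (Finset.Subset.refl _))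
    · exact sigma_skel hk hr4 hrn
end

section
/- Let r ≥ 2 and n ≥ r + 1 be integers and let G = P_n × P_2 be the Cartesian product of the path graphs on n and 2 vertices (the ladder graph). Then G is not r-gap-free; that is, there exist two circuits E_1, E_2 ∈ E(Con_r(G)) with E_1 ∩ E_2 = ∅ such that E_1 and E_2 are the only members of E(Con_r(G)) contained in E_1 ∪ E_2. -/
open Finset

variable {V : Type*} [Fintype V] [DecidableEq V]

section AuxLadder
open SimpleGraph

open SimpleGraph


/-- value function on ladder vertices -/
def phiL {n : ℕ} (v : Fin n × Fin 2) : ℕ := 2 * v.1.1 + v.2.1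

/-- a "slice" of the ladder -/
def sliceL (n a b : ℕ) : Finset (Fin n × Fin 2) :=
  Finset.univ.filter (fun v => a ≤ phiL v ∧ phiL v < b)

lemma mem_sliceL {n a b : ℕ} {v : Fin n × Fin 2} :
    v ∈ sliceL n a b ↔ a ≤ phiL v ∧ phiL v < b := by
  simp [sliceL]

lemma card_sliceL (n a r : ℕ) (h : a + r ≤ 2 * n) :
    (sliceL n a (a + r)).card = r := by
  have himg : sliceL n a (a + r) =
      (Finset.univ : Finset (Fin r)).image
        (fun k => ((⟨(a + k.1) / 2, by have := k.isLt; omega⟩ : Fin n),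
                   (⟨(a + k.1) % 2, by omega⟩ : Fin 2))) := by
    ext ⟨i, j⟩
    simp only [mem_sliceL, Finset.mem_image, Finset.mem_univ, true_and]
    constructor
    · rintro ⟨h1, h2⟩
      refine ⟨⟨phiL (i, j) - a, by omega⟩, ?_⟩
      have hj := j.isLt
      have hphi : phiL (i, j) = 2 * i.1 + j.1 := rfl
      apply Prod.ext
      · apply Fin.ext; simp [hphi]; omega
      · apply Fin.ext; simp [hphi]; omega
    · rintro ⟨k, hkeq⟩
      have hk := k.isLt
      have hphi : phiL ((⟨(a + k.1) / 2, by have := k.isLt; omega⟩ : Fin n),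
                   (⟨(a + k.1) % 2, by omega⟩ : Fin 2)) = a + k.1 := by
        simp [phiL]; omega
      rw [← hkeq, hphi]; omega
  rw [himg, Finset.card_image_of_injective _ ?_, Finset.card_univ, Fintype.card_fin]
  intro k₁ k₂ hkk
  have h1 := congrArg (fun v => phiL v) hkk
  simp only [phiL] at h1
  apply Fin.ext
  omega

/-- adjacency in the ladder changes `phiL` by at most 2 -/
lemma adj_phiL {n : ℕ} {u v : Fin n × Fin 2}
    (h : ((pathGraph n).boxProd (pathGraph 2)).Adj u v) :
    phiL u ≤ phiL v + 2 ∧ phiL v ≤ phiL u + 2 := by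
  rcases boxProd_adj.mp h with ⟨h1, h2⟩ | ⟨h1, h2⟩
  · rcases pathGraph_adj.mp h1 with h3 | h3 <;>
      simp only [phiL, Prod.ext_iff] at * <;> omega
  · rcases pathGraph_adj.mp h1 with h3 | h3 <;>
      simp only [phiL, Prod.ext_iff] at * <;> omega

lemma cross_of_reachable {V : Type*} {G : SimpleGraph V} {s : Set V} {p : V → Prop}
    {u v : s} (h : (G.induce s).Reachable u v) (hu : p u) (hv : ¬ p v) :
    ∃ a b : s, G.Adj a b ∧ p a ∧ ¬ p b := by
  obtain ⟨w⟩ := h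
  induction w with
  | nil => exact absurd hu hv
  | @cons a b c hab q ih =>
    by_cases hp : p b
    · exact ih hp hv
    · exact ⟨a, b, hab, hu, hp⟩


lemma connOn_of_reach {V : Type*} [Fintype V] [DecidableEq V] {G : SimpleGraph V}
    {S : Finset V} {base : V} (hb : base ∈ S)
    (H : ∀ v : (S : Set V), (G.induce (S : Set V)).Reachable v ⟨base, by simpa using hb⟩) :
    ConnOn G S := by
  haveI : Nonempty (S : Set V) := ⟨⟨base, by simpa using hb⟩⟩
  exact ⟨fun u v => (H u).trans (H v).symm⟩

lemma reach_adj {V : Type*} {G : SimpleGraph V} {s : Set V} {a b : V}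
    (ha : a ∈ s) (hb : b ∈ s) (h : G.Adj a b) :
    (G.induce s).Reachable ⟨a, ha⟩ ⟨b, hb⟩ :=
  SimpleGraph.Adj.reachable (by simpa using h)

/-- connectivity of the lower slice `[0, r)` -/
lemma conn_low (n r : ℕ) (hr : 1 ≤ r) (hn0 : 0 < n) :
    ConnOn ((pathGraph n).boxProd (pathGraph 2)) (sliceL n 0 r) := by
  set G := (pathGraph n).boxProd (pathGraph 2) with hG
  have hbase : ((⟨0, hn0⟩ : Fin n), (0 : Fin 2)) ∈ sliceL n 0 r := by
    rw [mem_sliceL]; simp [phiL]; omega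
  apply connOn_of_reach hbase
  have key : ∀ k (v : Fin n × Fin 2) (hv : v ∈ sliceL n 0 r), phiL v = k →
      (G.induce ((sliceL n 0 r : Finset _) : Set _)).Reachable
        ⟨v, by simpa using hv⟩ ⟨_, by simpa using hbase⟩ := by
    intro k
    induction k using Nat.strong_induction_on with
    | _ k ih =>
      rintro ⟨i, j⟩ hv hk
      have hvs := mem_sliceL.mp hv
      have hj := j.isLt
      have hphi : phiL (i, j) = 2 * i.1 + j.1 := rfl
      by_cases hj1 : j.1 = 1
      · -- go down to (i, 0)
        set w : Fin n × Fin 2 := (i, (0 : Fin 2)) with hw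
        have hwmem : w ∈ sliceL n 0 r := by rw [mem_sliceL]; simp [phiL, hw]; omega
        have hadj : G.Adj (i, j) w := by
          rw [hG, boxProd_adj]
          right
          refine ⟨pathGraph_adj.mpr ?_, rfl⟩
          simp [hw]; omega
        exact (reach_adj (by simpa using hv) (by simpa using hwmem) hadj).trans
          (ih (phiL w) (by simp [phiL, hw] at *; omega) w hwmem rfl)
      · by_cases hi0 : i.1 = 0
        · -- v is the base
          have heq : ((i, j) : Fin n × Fin 2) = ((⟨0, hn0⟩ : Fin n), (0 : Fin 2)) := by
            apply Prod.ext <;> apply Fin.ext <;> simp <;> omega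
          have heq2 : (⟨(i, j), by simpa using hv⟩ :
              ((sliceL n 0 r : Finset _) : Set (Fin n × Fin 2))) =
              ⟨_, by simpa using hbase⟩ := Subtype.ext heq
          rw [heq2]
        · -- go left to (i-1, 0)
          set w : Fin n × Fin 2 := ((⟨i.1 - 1, by omega⟩ : Fin n), j) with hw
          have hwmem : w ∈ sliceL n 0 r := by
            rw [mem_sliceL]; simp [phiL, hw]; omega
          have hadj : G.Adj (i, j) w := by
            rw [hG, boxProd_adj]
            left
            refine ⟨pathGraph_adj.mpr ?_, rfl⟩
            simp [hw]; omega
          exact (reach_adj (by simpa using hv) (by simpa using hwmem) hadj).trans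
            (ih (phiL w) (by simp [phiL, hw] at *; omega) w hwmem rfl)
  intro v
  exact key (phiL v.1) v.1 (by simpa using v.2) rfl

/-- connectivity of the upper slice `[r+2, 2r+2)` -/
lemma conn_high (n r : ℕ) (hr : 2 ≤ r) (hn : r + 1 ≤ n) :
    ConnOn ((pathGraph n).boxProd (pathGraph 2)) (sliceL n (r + 2) (2 * r + 2)) := by
  set G := (pathGraph n).boxProd (pathGraph 2) with hG
  have hrn : r < n := by omega
  have hbase : ((⟨r, hrn⟩ : Fin n), (1 : Fin 2)) ∈ sliceL n (r + 2) (2 * r + 2) := by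
    rw [mem_sliceL]; simp [phiL]; omega
  apply connOn_of_reach hbase
  have key : ∀ k (v : Fin n × Fin 2) (hv : v ∈ sliceL n (r + 2) (2 * r + 2)),
      2 * r + 1 - phiL v = k →
      (G.induce ((sliceL n (r + 2) (2 * r + 2) : Finset _) : Set _)).Reachable
        ⟨v, by simpa using hv⟩ ⟨_, by simpa using hbase⟩ := by
    intro k
    induction k using Nat.strong_induction_on with
    | _ k ih =>
      rintro ⟨i, j⟩ hv hk
      have hvs := mem_sliceL.mp hv
      have hj := j.isLt
      have hphi : phiL (i, j) = 2 * i.1 + j.1 := rfl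
      by_cases hj0 : j.1 = 0
      · -- go up to (i, 1)
        set w : Fin n × Fin 2 := (i, (1 : Fin 2)) with hw
        have hwmem : w ∈ sliceL n (r + 2) (2 * r + 2) := by
          rw [mem_sliceL]; simp [phiL, hw] at *; omega
        have hadj : G.Adj (i, j) w := by
          rw [hG, boxProd_adj]
          right
          refine ⟨pathGraph_adj.mpr ?_, rfl⟩
          simp [hw]; omega
        exact (reach_adj (by simpa using hv) (by simpa using hwmem) hadj).trans
          (ih (2 * r + 1 - phiL w) (by simp [phiL, hw] at *; omega) w hwmem rfl)
      · by_cases hir : i.1 = r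
        · -- v is the base
          have heq : ((i, j) : Fin n × Fin 2) = ((⟨r, hrn⟩ : Fin n), (1 : Fin 2)) := by
            apply Prod.ext <;> apply Fin.ext <;> simp <;> omega
          have heq2 : (⟨(i, j), by simpa using hv⟩ :
              ((sliceL n (r + 2) (2 * r + 2) : Finset _) : Set (Fin n × Fin 2))) =
              ⟨_, by simpa using hbase⟩ := Subtype.ext heq
          rw [heq2]
        · -- go right to (i+1, 1)
          have hilt : i.1 < r := by
            have : 2 * i.1 + j.1 < 2 * r + 2 := hvs.2
            omega
          set w : Fin n × Fin 2 := ((⟨i.1 + 1, by omega⟩ : Fin n), j) with hw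
          have hwmem : w ∈ sliceL n (r + 2) (2 * r + 2) := by
            rw [mem_sliceL]; simp [phiL, hw] at *; omega
          have hadj : G.Adj (i, j) w := by
            rw [hG, boxProd_adj]
            left
            refine ⟨pathGraph_adj.mpr ?_, rfl⟩
            simp [hw]
          exact (reach_adj (by simpa using hv) (by simpa using hwmem) hadj).trans
            (ih (2 * r + 1 - phiL w) (by simp [phiL, hw] at *; omega) w hwmem rfl)
  intro v
  exact key (2 * r + 1 - phiL v.1) v.1 (by simpa using v.2) rfl


end AuxLadder

/-- For `r ≥ 2` and `n ≥ r + 1`, the ladder graph `P_n × P_2` is not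
`r`-gap-free: there are two disjoint circuits `E₁, E₂ ∈ E(Con_r(P_n × P_2))` that are the
only circuits contained in `E₁ ∪ E₂`. -/
theorem ladder_not_rGapFree (n r : ℕ) (hr : 2 ≤ r) (hn : r + 1 ≤ n) :
    ∃ E₁ E₂ : Finset (Fin n × Fin 2),
      E₁ ∈ ConR ((SimpleGraph.pathGraph n).boxProd (SimpleGraph.pathGraph 2))
            Finset.univ r ∧
      E₂ ∈ ConR ((SimpleGraph.pathGraph n).boxProd (SimpleGraph.pathGraph 2))
            Finset.univ r ∧
      Disjoint E₁ E₂ ∧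
      ∀ W ∈ ConR ((SimpleGraph.pathGraph n).boxProd (SimpleGraph.pathGraph 2))
            Finset.univ r,
        W ⊆ E₁ ∪ E₂ → W = E₁ ∨ W = E₂ := by
  set G := (SimpleGraph.pathGraph n).boxProd (SimpleGraph.pathGraph 2) with hG
  have hcard1 : (sliceL n 0 r).card = r := by
    have h := card_sliceL n 0 r (by omega)
    simpa using h
  have hcard2 : (sliceL n (r + 2) (2 * r + 2)).card = r := by
    have h := card_sliceL n (r + 2) r (by omega)
    have he : r + 2 + r = 2 * r + 2 := by ring
    rwa [he] at h
  refine ⟨sliceL n 0 r, sliceL n (r + 2) (2 * r + 2), ?_, ?_, ?_, ?_⟩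
  · exact ⟨Finset.subset_univ _, hcard1, conn_low n r (by omega) (by omega)⟩
  · exact ⟨Finset.subset_univ _, hcard2, conn_high n r hr hn⟩
  · rw [Finset.disjoint_left]
    intro a ha hb
    rw [mem_sliceL] at ha hb
    omega
  · intro W hW hsub
    obtain ⟨-, hcard, hconn⟩ := hW
    have hcross : ∀ a b : Fin n × Fin 2, a ∈ sliceL n 0 r →
        b ∈ sliceL n (r + 2) (2 * r + 2) → ¬ G.Adj a b := by
      intro a b ha hb hadj
      have h2 := adj_phiL hadj
      rw [mem_sliceL] at ha hb
      omega
    by_cases h1 : W ⊆ sliceL n 0 r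
    · left
      exact Finset.eq_of_subset_of_card_le h1 (by omega)
    · right
      obtain ⟨b, hbW, hbnot⟩ := Finset.not_subset.mp h1
      have hb2 : b ∈ sliceL n (r + 2) (2 * r + 2) :=
        (Finset.mem_union.mp (hsub hbW)).resolve_left hbnot
      have hWsub : W ⊆ sliceL n (r + 2) (2 * r + 2) := by
        intro a haW
        by_contra hanot
        have ha1 : a ∈ sliceL n 0 r := (Finset.mem_union.mp (hsub haW)).resolve_right hanot
        have hreach := hconn.preconnected ⟨a, by simpa using haW⟩ ⟨b, by simpa using hbW⟩
        obtain ⟨x, y, hadj, hx1, hynot⟩ :=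
          cross_of_reachable (p := fun v => v ∈ sliceL n 0 r) hreach ha1 hbnot
        have hyW : (y : Fin n × Fin 2) ∈ W := by simpa using y.2
        have hy2 : (y : Fin n × Fin 2) ∈ sliceL n (r + 2) (2 * r + 2) :=
          (Finset.mem_union.mp (hsub hyW)).resolve_left hynot
        exact hcross x y hx1 hy2 hadj
      exact Finset.eq_of_subset_of_card_le hWsub (by omega)
end

section
/- Let r ≥ 2 and n ≥ 1 be integers with n ≤ r, and let G = P_n × P_2 be the Cartesian product of the path graphs on n and 2 vertices (the ladder graph). Then the simplicial complex Σ_r(G) is vertex decomposable. -/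
open Finset

variable {V : Type*} [Fintype V] [DecidableEq V]

/-! ### Reflexive-transitive-closure description of connectivity on a finset -/

/-- One step of adjacency inside a finset. -/
def stepRel (G : SimpleGraph V) (s : Finset V) (a b : V) : Prop :=
  a ∈ s ∧ b ∈ s ∧ G.Adj a b

lemma stepRel_symm (G : SimpleGraph V) (s : Finset V) : Symmetric (stepRel G s) :=
  fun _ _ h => ⟨h.2.1, h.1, h.2.2.symm⟩

lemma walk_to_rt {G : SimpleGraph V} {s : Finset V} :
    ∀ {a b : ((s : Set V) : Type _)}, (G.induce (s : Set V)).Walk a b →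
      Relation.ReflTransGen (stepRel G s) a.1 b.1 := by
  intro a b w
  induction w with
  | nil => exact Relation.ReflTransGen.refl
  | @cons u v w h p ih =>
    refine Relation.ReflTransGen.head ⟨?_, ?_, ?_⟩ ih
    · exact Finset.mem_coe.mp u.2
    · exact Finset.mem_coe.mp v.2
    · exact h

lemma rt_to_reach {G : SimpleGraph V} {s : Finset V} {u v : V}
    (h : Relation.ReflTransGen (stepRel G s) u v) :
    ∀ (hu : u ∈ s) (hv : v ∈ s),
      (G.induce (s : Set V)).Reachable ⟨u, Finset.mem_coe.mpr hu⟩ ⟨v, Finset.mem_coe.mpr hv⟩ := by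
  induction h with
  | refl => intro hu hv; rfl
  | @tail b c hub hbc ih =>
    intro hu hv
    refine (ih hu hbc.1).trans ?_
    exact SimpleGraph.Adj.reachable (by exact hbc.2.2)

lemma connOn_iff {G : SimpleGraph V} {s : Finset V} :
    ConnOn G s ↔ s.Nonempty ∧ ∀ u ∈ s, ∀ v ∈ s, Relation.ReflTransGen (stepRel G s) u v := by
  constructor
  · intro h
    have hne : s.Nonempty := by
      obtain ⟨⟨x, hx⟩⟩ := h.nonempty
      exact ⟨x, Finset.mem_coe.mp hx⟩
    refine ⟨hne, fun u hu v hv => ?_⟩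
    obtain ⟨w⟩ := h.preconnected ⟨u, Finset.mem_coe.mpr hu⟩ ⟨v, Finset.mem_coe.mpr hv⟩
    exact walk_to_rt w
  · rintro ⟨⟨w, hw⟩, h⟩
    haveI : Nonempty ((s : Set V) : Type _) := ⟨⟨w, Finset.mem_coe.mpr hw⟩⟩
    refine ⟨fun a b => ?_⟩
    have ha := Finset.mem_coe.mp a.2
    have hb := Finset.mem_coe.mp b.2
    have := rt_to_reach (h a.1 ha b.1 hb) ha hb
    convert this <;> simp

set_option linter.unusedSectionVars false

lemma connOn_singleton (G : SimpleGraph V) (x : V) : ConnOn G {x} := by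
  rw [connOn_iff]
  refine ⟨⟨x, Finset.mem_singleton_self x⟩, fun u hu v hv => ?_⟩
  rw [Finset.mem_singleton] at hu hv
  subst hu; subst hv
  exact Relation.ReflTransGen.refl

lemma connOn_insert {G : SimpleGraph V} {s : Finset V} {x w : V}
    (hs : ConnOn G s) (hw : w ∈ s) (hadj : G.Adj x w) : ConnOn G (insert x s) := by
  rw [connOn_iff] at hs ⊢
  obtain ⟨hne, h⟩ := hs
  refine ⟨⟨x, Finset.mem_insert_self x s⟩, ?_⟩
  have mono : ∀ {u v : V}, Relation.ReflTransGen (stepRel G s) u v →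
      Relation.ReflTransGen (stepRel G (insert x s)) u v := by
    intro u v huv
    refine Relation.ReflTransGen.mono ?_ u v huv
    rintro a b ⟨ha, hb, hab⟩
    exact ⟨Finset.mem_insert_of_mem ha, Finset.mem_insert_of_mem hb, hab⟩
  have reach_w : ∀ u ∈ insert x s, Relation.ReflTransGen (stepRel G (insert x s)) u w := by
    intro u hu
    rcases Finset.mem_insert.mp hu with rfl | hu'
    · exact Relation.ReflTransGen.single
        ⟨Finset.mem_insert_self _ _, Finset.mem_insert_of_mem hw, hadj⟩
    · exact mono (h u hu' w hw)
  intro u hu v hv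
  refine (reach_w u hu).trans ?_
  haveI : Std.Symm (stepRel G (insert x s)) := ⟨fun a b h => stepRel_symm G _ h⟩
  exact Std.Symm.symm _ _ (reach_w v hv)

lemma exists_adj_of_connOn_union {G : SimpleGraph V} {F A : Finset V}
    (h : ConnOn G (F ∪ A)) (hF : F.Nonempty) (hA : A.Nonempty) (hdisj : F ∩ A = ∅) :
    ∃ f ∈ F, ∃ a ∈ A, G.Adj a f := by
  obtain ⟨f₀, hf₀⟩ := hF
  obtain ⟨a₀, ha₀⟩ := hA
  rw [connOn_iff] at h
  have hrt := h.2 a₀ (Finset.mem_union_right _ ha₀) f₀ (Finset.mem_union_left _ hf₀)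
  clear h
  induction hrt using Relation.ReflTransGen.head_induction_on with
  | refl =>
    exfalso
    have : f₀ ∈ F ∩ A := Finset.mem_inter.mpr ⟨hf₀, ha₀⟩
    simp [hdisj] at this
  | @head u c h' h ih =>
    by_cases hcF : c ∈ F
    · exact ⟨c, hcF, u, ha₀, h'.2.2⟩
    · have hcA : c ∈ A := by
        rcases Finset.mem_union.mp h'.2.1 with h1 | h1
        · exact absurd h1 hcF
        · exact h1
      exact ih hcA

lemma prune (G : SimpleGraph V) :
    ∀ (k : ℕ) (Z B : Finset V), (Z \ B).card = k → ConnOn G Z → ConnOn G B →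
      B ⊆ Z → B ≠ Z → ∃ y ∈ Z \ B, ConnOn G (Z.erase y) := by
  intro k
  induction k with
  | zero =>
    intro Z B hcard hZ hB hBZ hne
    exfalso
    apply hne
    have : Z \ B = ∅ := Finset.card_eq_zero.mp hcard
    have hZB : Z ⊆ B := by
      intro z hz
      by_contra hzB
      have : z ∈ Z \ B := Finset.mem_sdiff.mpr ⟨hz, hzB⟩
      simp [‹Z \ B = ∅›] at this
    exact Finset.Subset.antisymm hBZ hZB
  | succ k ih =>
    intro Z B hcard hZ hB hBZ hne
    have hFne : (Z \ B).Nonempty := by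
      rw [← Finset.card_pos, hcard]; omega
    have hBne : B.Nonempty := by
      rw [connOn_iff] at hB; exact hB.1
    have hunion : (Z \ B) ∪ B = Z := Finset.sdiff_union_of_subset hBZ
    have hdisj : (Z \ B) ∩ B = ∅ := Finset.sdiff_inter_self _ _
    obtain ⟨f, hf, a, ha, hadj⟩ :=
      exists_adj_of_connOn_union (by rw [hunion]; exact hZ) hFne hBne hdisj
    have hfZ : f ∈ Z := (Finset.mem_sdiff.mp hf).1
    have hfB : f ∉ B := (Finset.mem_sdiff.mp hf).2
    have hB' : ConnOn G (insert f B) := connOn_insert hB ha hadj.symm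
    have hB'Z : insert f B ⊆ Z := Finset.insert_subset hfZ hBZ
    by_cases heq : insert f B = Z
    · refine ⟨f, hf, ?_⟩
      have : Z.erase f = B := by
        rw [← heq, Finset.erase_insert hfB]
      rw [this]; exact hB
    · have hcard' : (Z \ insert f B).card = k := by
        rw [Finset.sdiff_insert]
        rw [Finset.card_erase_of_mem (Finset.mem_sdiff.mpr ⟨hfZ, hfB⟩), hcard]
        omega
      obtain ⟨y, hy, hconn⟩ := ih Z (insert f B) hcard' hZ hB' hB'Z heq
      refine ⟨y, ?_, hconn⟩
      have := Finset.mem_sdiff.mp hy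
      exact Finset.mem_sdiff.mpr ⟨this.1, fun hyB => this.2 (Finset.mem_insert_of_mem hyB)⟩

/-! ### Framework lemmas for `SigmaC` -/

section Framework

variable {G : SimpleGraph V} {U A : Finset V} {r : ℕ} {x : V}

lemma sdiffA_eq (hUA : A ∩ U = ∅) (F : Finset V) : (U \ F) \ A = U \ F := by
  ext v
  simp only [Finset.mem_sdiff, and_iff_left_iff_imp]
  intro hv hvA
  have : v ∈ A ∩ U := Finset.mem_inter.mpr ⟨hvA, hv.1⟩
  simp [hUA] at this

lemma mem_sigmaC (hUA : A ∩ U = ∅) {H : Finset V} :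
    H ∈ SigmaC G U A r ↔ ∃ F ∈ Supp G U A r, H ⊆ U \ F := by
  unfold SigmaC
  simp only [Set.mem_setOf_eq]
  constructor
  · rintro ⟨F, hF, hsub⟩; exact ⟨F, hF, by rwa [sdiffA_eq hUA F] at hsub⟩
  · rintro ⟨F, hF, hsub⟩; exact ⟨F, hF, by rwa [sdiffA_eq hUA F]⟩

lemma sigmaC_lower {H H' : Finset V} (hH : H ∈ SigmaC G U A r) (hsub : H' ⊆ H) :
    H' ∈ SigmaC G U A r := by
  obtain ⟨F, hF, h⟩ := hH
  exact ⟨F, hF, hsub.trans h⟩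

lemma notMem_A (hxU : x ∈ U) (hUA : A ∩ U = ∅) : x ∉ A := by
  intro hxA
  have : x ∈ A ∩ U := Finset.mem_inter.mpr ⟨hxA, hxU⟩
  simp [hUA] at this

lemma link_eq (hxU : x ∈ U) (hUA : A ∩ U = ∅) :
    linkC (SigmaC G U A r) x = SigmaC G (U.erase x) A r := by
  have hxA : x ∉ A := notMem_A hxU hUA
  have hUA' : A ∩ U.erase x = ∅ := by
    ext v; simp only [Finset.mem_inter, Finset.mem_erase, Finset.notMem_empty, iff_false]
    rintro ⟨hvA, _, hvU⟩
    have : v ∈ A ∩ U := Finset.mem_inter.mpr ⟨hvA, hvU⟩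
    simp [hUA] at this
  ext H
  constructor
  · rintro ⟨_, hxH, hins⟩
    rw [mem_sigmaC hUA] at hins
    obtain ⟨F, hF, hsub⟩ := hins
    have hxF : x ∉ F := by
      intro hxF
      have := hsub (Finset.mem_insert_self x H)
      exact (Finset.mem_sdiff.mp this).2 hxF
    rw [mem_sigmaC hUA']
    refine ⟨F, ⟨Finset.subset_erase.mpr ⟨hF.1, hxF⟩, hF.2.1, hF.2.2⟩, ?_⟩
    intro v hv
    have hvH : v ∈ insert x H := Finset.mem_insert_of_mem hv
    have := Finset.mem_sdiff.mp (hsub hvH)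
    exact Finset.mem_sdiff.mpr ⟨Finset.mem_erase.mpr ⟨fun h => hxH (h ▸ hv), this.1⟩, this.2⟩
  · intro hH
    rw [mem_sigmaC hUA'] at hH
    obtain ⟨F, hF, hsub⟩ := hH
    have hFU : F ⊆ U := hF.1.trans (Finset.erase_subset _ _)
    have hxH : x ∉ H := by
      intro hxH
      have := (Finset.mem_sdiff.mp (hsub hxH)).1
      exact absurd ((Finset.mem_erase.mp this).1 rfl) (by simp)
    have hxF : x ∉ F := fun hxF => by
      have := hF.1 hxF; exact absurd ((Finset.mem_erase.mp this).1 rfl) (by simp)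
    have hHmem : H ∈ SigmaC G U A r := by
      rw [mem_sigmaC hUA]
      exact ⟨F, ⟨hFU, hF.2.1, hF.2.2⟩, hsub.trans
        (Finset.sdiff_subset_sdiff (Finset.erase_subset _ _) (le_refl _))⟩
    refine ⟨hHmem, hxH, ?_⟩
    rw [mem_sigmaC hUA]
    refine ⟨F, ⟨hFU, hF.2.1, hF.2.2⟩, ?_⟩
    intro v hv
    rcases Finset.mem_insert.mp hv with rfl | hv'
    · exact Finset.mem_sdiff.mpr ⟨hxU, hxF⟩
    · have := Finset.mem_sdiff.mp (hsub hv')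
      exact Finset.mem_sdiff.mpr ⟨(Finset.mem_erase.mp this.1).2, this.2⟩

lemma ghost_eq (hall : ∀ F ∈ Supp G U A r, x ∈ F) :
    SigmaC G U A r = delC (SigmaC G U A r) x := by
  ext H
  refine ⟨fun hH => ⟨hH, ?_⟩, fun h => h.1⟩
  obtain ⟨F, hF, hsub⟩ := hH
  intro hxH
  have := Finset.mem_sdiff.mp (Finset.mem_sdiff.mp (hsub hxH)).1
  exact this.2 (hall F hF)

/-- The split condition (b). -/
def SplitCond (G : SimpleGraph V) (U A : Finset V) (r : ℕ) (x : V) : Prop :=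
  ∀ F ∈ Supp G U A r, x ∉ F → ∃ F' ∈ Supp G U A r, x ∈ F' ∧ F' \ {x} ⊆ F

lemma del_eq (hxU : x ∈ U) (hUA : A ∩ U = ∅) (hr : 1 ≤ r)
    (hsplit : SplitCond G U A r x) :
    delC (SigmaC G U A r) x = SigmaC G (U.erase x) (insert x A) (r - 1) := by
  have hxA : x ∉ A := notMem_A hxU hUA
  have hUA' : insert x A ∩ U.erase x = ∅ := by
    ext v
    simp only [Finset.mem_inter, Finset.mem_insert, Finset.mem_erase, Finset.notMem_empty,
      iff_false]
    rintro ⟨(rfl | hvA), hne, hvU⟩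
    · exact hne rfl
    · have : v ∈ A ∩ U := Finset.mem_inter.mpr ⟨hvA, hvU⟩
      simp [hUA] at this
  ext H
  constructor
  · rintro ⟨hH, hxH⟩
    rw [mem_sigmaC hUA] at hH
    obtain ⟨F, hF, hsub⟩ := hH
    -- get a witness containing x
    obtain ⟨F', hF', hxF', hF'sub⟩ : ∃ F' ∈ Supp G U A r, x ∈ F' ∧ F' \ {x} ⊆ F := by
      by_cases hxF : x ∈ F
      · exact ⟨F, hF, hxF, by intro v hv; exact (Finset.mem_sdiff.mp hv).1⟩
      · exact hsplit F hF hxF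
    rw [mem_sigmaC hUA']
    refine ⟨F'.erase x, ⟨?_, ?_, ?_, ?_⟩, ?_⟩
    · exact Finset.erase_subset_erase x hF'.1
    · rw [Finset.card_erase_of_mem hxF', hF'.2.1]
    · ext v
      simp only [Finset.mem_inter, Finset.mem_erase, Finset.mem_insert, Finset.notMem_empty,
        iff_false]
      rintro ⟨⟨hne, hvF'⟩, (rfl | hvA)⟩
      · exact hne rfl
      · have : v ∈ F' ∩ A := Finset.mem_inter.mpr ⟨hvF', hvA⟩
        simp [hF'.2.2.1] at this
    · have : F'.erase x ∪ insert x A = F' ∪ A := by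
        rw [Finset.union_insert, ← Finset.insert_union, Finset.insert_erase hxF']
      rw [this]
      exact hF'.2.2.2
    · intro v hv
      have hvU : v ∈ U := (Finset.mem_sdiff.mp (hsub hv)).1
      have hvF : v ∉ F := (Finset.mem_sdiff.mp (hsub hv)).2
      have hvx : v ≠ x := fun h => hxH (h ▸ hv)
      refine Finset.mem_sdiff.mpr ⟨Finset.mem_erase.mpr ⟨hvx, hvU⟩, ?_⟩
      intro hvF'
      exact hvF (hF'sub (Finset.mem_sdiff.mpr ⟨(Finset.mem_erase.mp hvF').2,
        by simpa using hvx⟩))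
  · intro hH
    rw [mem_sigmaC hUA'] at hH
    obtain ⟨F'', hF'', hsub⟩ := hH
    have hxF'' : x ∉ F'' := by
      intro hx
      have : x ∈ F'' ∩ insert x A := Finset.mem_inter.mpr ⟨hx, Finset.mem_insert_self _ _⟩
      simp [hF''.2.2.1] at this
    have hxH : x ∉ H := by
      intro hx
      have := (Finset.mem_sdiff.mp (hsub hx)).1
      exact absurd ((Finset.mem_erase.mp this).1 rfl) (by simp)
    refine ⟨?_, hxH⟩
    rw [mem_sigmaC hUA]
    refine ⟨insert x F'', ⟨?_, ?_, ?_, ?_⟩, ?_⟩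
    · exact Finset.insert_subset hxU (hF''.1.trans (Finset.erase_subset _ _))
    · rw [Finset.card_insert_of_notMem hxF'', hF''.2.1]; omega
    · ext v
      simp only [Finset.mem_inter, Finset.mem_insert, Finset.notMem_empty, iff_false, not_and]
      rintro (rfl | hvF'') hvA
      · exact hxA hvA
      · have : v ∈ F'' ∩ insert x A :=
          Finset.mem_inter.mpr ⟨hvF'', Finset.mem_insert_of_mem hvA⟩
        simp [hF''.2.2.1] at this
    · have : insert x F'' ∪ A = F'' ∪ insert x A := by
        rw [Finset.union_insert, Finset.insert_union]
      rw [this]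
      exact hF''.2.2.2
    · intro v hv
      have h1 := Finset.mem_sdiff.mp (hsub hv)
      have h2 := Finset.mem_erase.mp h1.1
      refine Finset.mem_sdiff.mpr ⟨h2.2, ?_⟩
      intro hvF
      rcases Finset.mem_insert.mp hvF with rfl | hvF''
      · exact h2.1 rfl
      · exact h1.2 hvF''

lemma card_face_le (hUA : A ∩ U = ∅) {H : Finset V} (hH : H ∈ SigmaC G U A r) :
    H.card ≤ U.card - r := by
  rw [mem_sigmaC hUA] at hH
  obtain ⟨F, hF, hsub⟩ := hH
  calc H.card ≤ (U \ F).card := Finset.card_le_card hsub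
    _ = U.card - r := by rw [Finset.card_sdiff_of_subset hF.1, hF.2.1]

lemma shed_of_split (hxU : x ∈ U) (hUA : A ∩ U = ∅) (hsplit : SplitCond G U A r x) :
    IsShedding (SigmaC G U A r) x := by
  intro Fh hFh
  obtain ⟨⟨hFhS, hxFh⟩, hmax⟩ := hFh
  refine ⟨hFhS, ?_⟩
  intro K hK hsubK
  have hKx : K.erase x ∈ delC (SigmaC G U A r) x :=
    ⟨sigmaC_lower hK (Finset.erase_subset _ _), Finset.notMem_erase _ _⟩
  have hFhKx : Fh ⊆ K.erase x := Finset.subset_erase.mpr ⟨hsubK, hxFh⟩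
  have heq : Fh = K.erase x := hmax _ hKx hFhKx
  by_cases hxK : x ∈ K
  · exfalso
    -- K = insert x Fh
    have hKeq : K = insert x Fh := by rw [heq, Finset.insert_erase hxK]
    rw [mem_sigmaC hUA] at hK
    obtain ⟨F, hF, hsubUF⟩ := hK
    have hxF : x ∉ F := by
      intro h
      exact (Finset.mem_sdiff.mp (hsubUF hxK)).2 h
    obtain ⟨F', hF', hxF', hF'sub⟩ := hsplit F hF hxF
    -- U \ F' is a face of the deletion containing Fh
    have hUF' : U \ F' ∈ delC (SigmaC G U A r) x := by
      refine ⟨?_, ?_⟩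
      · rw [mem_sigmaC hUA]; exact ⟨F', hF', le_refl _⟩
      · simp only [Finset.mem_sdiff, not_and, not_not]
        intro _; exact hxF'
    have hFhUF' : Fh ⊆ U \ F' := by
      intro v hv
      have hvK : v ∈ K := hsubK hv
      have h1 := Finset.mem_sdiff.mp (hsubUF hvK)
      refine Finset.mem_sdiff.mpr ⟨h1.1, ?_⟩
      intro hvF'
      have hvx : v ≠ x := fun h => hxFh (h ▸ hv)
      exact h1.2 (hF'sub (Finset.mem_sdiff.mpr ⟨hvF', by simpa using hvx⟩))
    have heq2 : Fh = U \ F' := hmax _ hUF' hFhUF'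
    -- cardinality contradiction
    have hc1 : (U \ F').card = U.card - r := by
      rw [Finset.card_sdiff_of_subset hF'.1, hF'.2.1]
    have hrU : r ≤ U.card := by
      rw [← hF'.2.1]; exact Finset.card_le_card hF'.1
    have hc2 : K.card ≤ U.card - r := card_face_le hUA (by rw [mem_sigmaC hUA]; exact ⟨F, hF, hsubUF⟩)
    have hxFh' : x ∉ Fh := hxFh
    have : K.card = Fh.card + 1 := by
      rw [hKeq, Finset.card_insert_of_notMem hxFh']
    rw [this, heq2, hc1] at hc2
    omega
  · rw [heq, Finset.erase_eq_of_notMem hxK]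

/-! ### Theorem A : with a nonempty connected anchor set, `SigmaC` is vertex decomposable -/

theorem thmA (G : SimpleGraph V) :
    ∀ (k : ℕ) (U A : Finset V) (r : ℕ), U.card = k → A.Nonempty → ConnOn G A →
      A ∩ U = ∅ → VD (SigmaC G U A r) := by
  intro k
  induction k using Nat.strong_induction_on with
  | _ k ih =>
    intro U A r hUcard hAne hAconn hUA
    rcases r with _ | r'
    · -- r = 0 : the complex is the full simplex on U
      have : SigmaC G U A 0 = {t | t ⊆ U} := by
        ext H
        rw [mem_sigmaC hUA]
        constructor
        · rintro ⟨F, hF, hsub⟩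
          exact hsub.trans (Finset.sdiff_subset)
        · intro hH
          refine ⟨∅, ⟨Finset.empty_subset _, Finset.card_empty, ?_, ?_⟩, ?_⟩
          · simp
          · rwa [Finset.empty_union]
          · rwa [Finset.sdiff_empty]
      rw [this]
      exact VD.simplex U
    · set r : ℕ := r' + 1 with hrdef
      by_cases hS : Supp G U A r = ∅
      · have : SigmaC G U A r = ∅ := by
          ext H
          simp only [Set.mem_empty_iff_false, iff_false]
          rintro ⟨F, hF, _⟩
          rw [hS] at hF
          exact hF
        rw [this]
        exact VD.void
      · obtain ⟨F₀, hF₀⟩ := Set.nonempty_iff_ne_empty.mpr hS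
        have hF₀ne : F₀.Nonempty := by
          rw [← Finset.card_pos, hF₀.2.1]; omega
        obtain ⟨f, hf, a, ha, hadj⟩ :=
          exists_adj_of_connOn_union hF₀.2.2.2 hF₀ne hAne hF₀.2.2.1
        set x : V := f with hxdef
        have hxU : x ∈ U := hF₀.1 hf
        have hxA : x ∉ A := notMem_A hxU hUA
        have hcard' : (U.erase x).card < k := by
          rw [Finset.card_erase_of_mem hxU, hUcard]
          have : 0 < k := by rw [← hUcard]; exact Finset.card_pos.mpr ⟨x, hxU⟩
          omega
        have hA'conn : ConnOn G (insert x A) := connOn_insert hAconn ha hadj.symm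
        have hA'disj : insert x A ∩ U.erase x = ∅ := by
          ext v
          simp only [Finset.mem_inter, Finset.mem_insert, Finset.mem_erase,
            Finset.notMem_empty, iff_false]
          rintro ⟨(rfl | hvA), hne, hvU⟩
          · exact hne rfl
          · have : v ∈ A ∩ U := Finset.mem_inter.mpr ⟨hvA, hvU⟩
            simp [hUA] at this
        have hAdisj' : A ∩ U.erase x = ∅ := by
          ext v
          simp only [Finset.mem_inter, Finset.mem_erase, Finset.notMem_empty, iff_false]
          rintro ⟨hvA, _, hvU⟩
          have : v ∈ A ∩ U := Finset.mem_inter.mpr ⟨hvA, hvU⟩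
          simp [hUA] at this
        by_cases hall : ∀ F ∈ Supp G U A r, x ∈ F
        · -- ghost case
          rw [ghost_eq hall, del_eq hxU hUA (by omega)
            (fun F hF hxF => absurd (hall F hF) hxF)]
          exact ih _ hcard' (U.erase x) (insert x A) (r - 1) rfl
            ⟨x, Finset.mem_insert_self _ _⟩ hA'conn hA'disj
        · push_neg at hall
          obtain ⟨F₁, hF₁, hxF₁⟩ := hall
          -- the split condition
          have hsplit : SplitCond G U A r x := by
            intro F hF hxF
            have hFne : F.Nonempty := by rw [← Finset.card_pos, hF.2.1]; omega
            set Z : Finset V := insert x (F ∪ A) with hZdef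
            set B : Finset V := insert x A with hBdef
            have hZconn : ConnOn G Z :=
              connOn_insert hF.2.2.2 (Finset.mem_union_right _ ha) hadj.symm
            have hBconn : ConnOn G B := hA'conn
            have hBZ : B ⊆ Z := Finset.insert_subset_insert _ Finset.subset_union_right
            have hFB : ∀ v ∈ F, v ∉ B := by
              intro v hv hvB
              rcases Finset.mem_insert.mp hvB with rfl | hvA
              · exact hxF hv
              · have : v ∈ F ∩ A := Finset.mem_inter.mpr ⟨hv, hvA⟩
                simp [hF.2.2.1] at this
            have hBneZ : B ≠ Z := by
              intro h
              obtain ⟨v, hv⟩ := hFne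
              have : v ∈ Z := Finset.mem_insert_of_mem (Finset.mem_union_left _ hv)
              rw [← h] at this
              exact hFB v hv this
            obtain ⟨y, hy, hyconn⟩ := prune G (Z \ B).card Z B rfl hZconn hBconn hBZ hBneZ
            have hyZ := (Finset.mem_sdiff.mp hy).1
            have hyB := (Finset.mem_sdiff.mp hy).2
            have hyF : y ∈ F := by
              rcases Finset.mem_insert.mp hyZ with rfl | hyFA
              · exact absurd (Finset.mem_insert_self _ _) hyB
              · rcases Finset.mem_union.mp hyFA with h1 | h1
                · exact h1
                · exact absurd (Finset.mem_insert_of_mem h1) hyB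
            have hyA : y ∉ A := fun h => hyB (Finset.mem_insert_of_mem h)
            have hyx : y ≠ x := fun h => hyB (h ▸ Finset.mem_insert_self _ _)
            refine ⟨(insert x F).erase y, ⟨?_, ?_, ?_, ?_⟩, ?_, ?_⟩
            · exact (Finset.erase_subset _ _).trans (Finset.insert_subset hxU hF.1)
            · rw [Finset.card_erase_of_mem
                (Finset.mem_insert_of_mem hyF), Finset.card_insert_of_notMem hxF, hF.2.1]
              omega
            · ext v
              simp only [Finset.mem_inter, Finset.mem_erase, Finset.mem_insert,
                Finset.notMem_empty, iff_false]
              rintro ⟨⟨hne, (rfl | hvF)⟩, hvA⟩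
              · exact hxA hvA
              · have : v ∈ F ∩ A := Finset.mem_inter.mpr ⟨hvF, hvA⟩
                simp [hF.2.2.1] at this
            · have : (insert x F).erase y ∪ A = (insert x (F ∪ A)).erase y := by
                ext v
                simp only [Finset.mem_union, Finset.mem_erase, Finset.mem_insert,
                  Finset.mem_union]
                constructor
                · rintro (⟨hne, (rfl | hvF)⟩ | hvA)
                  · exact ⟨hne, Or.inl rfl⟩
                  · exact ⟨hne, Or.inr (Or.inl hvF)⟩
                  · refine ⟨fun h => hyA (h ▸ hvA), Or.inr (Or.inr hvA)⟩
                · rintro ⟨hne, (rfl | hvF | hvA)⟩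
                  · exact Or.inl ⟨hne, Or.inl rfl⟩
                  · exact Or.inl ⟨hne, Or.inr hvF⟩
                  · exact Or.inr hvA
              rw [this, Finset.erase_eq]
              rw [hZdef] at hyconn
              rwa [Finset.erase_eq] at hyconn
            · exact Finset.mem_erase.mpr ⟨fun h => hyx h.symm, Finset.mem_insert_self _ _⟩
            · intro v hv
              have h1 := Finset.mem_sdiff.mp hv
              have h2 := Finset.mem_erase.mp h1.1
              rcases Finset.mem_insert.mp h2.2 with rfl | hvF
              · exact absurd (Finset.mem_singleton_self _) h1.2
              · exact hvF
          -- assemble the step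
          have hxmem : {x} ∈ SigmaC G U A r := by
            rw [mem_sigmaC hUA]
            exact ⟨F₁, hF₁, Finset.singleton_subset_iff.mpr
              (Finset.mem_sdiff.mpr ⟨hxU, hxF₁⟩)⟩
          have hlink : VD (linkC (SigmaC G U A r) x) := by
            rw [link_eq hxU hUA]
            exact ih _ hcard' (U.erase x) A r rfl hAne hAconn hAdisj'
          have hdel : VD (delC (SigmaC G U A r) x) := by
            rw [del_eq hxU hUA (by omega) hsplit]
            exact ih _ hcard' (U.erase x) (insert x A) (r - 1) rfl
              ⟨x, Finset.mem_insert_self _ _⟩ hA'conn hA'disj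
          exact VD.step _ x hxmem (shed_of_split hxU hUA hsplit) hlink hdel

/-! ### Ladder geometry -/

section Ladder

variable {n : ℕ}

/-- The ladder graph. -/
abbrev Lad (n : ℕ) : SimpleGraph (Fin n × Fin 2) :=
  (SimpleGraph.pathGraph n).boxProd (SimpleGraph.pathGraph 2)

lemma lad_adj_col {a b : Fin n × Fin 2} (h : (Lad n).Adj a b) :
    a.1 = b.1 ∨ a.1.val + 1 = b.1.val ∨ b.1.val + 1 = a.1.val := by
  rcases SimpleGraph.boxProd_adj.mp h with ⟨h1, _⟩ | ⟨_, h1⟩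
  · rcases SimpleGraph.pathGraph_adj.mp h1 with h2 | h2
    · exact Or.inr (Or.inl h2)
    · exact Or.inr (Or.inr h2)
  · exact Or.inl h1

lemma lad_adj_vert {i : Fin n} {s t : Fin 2} (hst : s ≠ t) : (Lad n).Adj (i, s) (i, t) := by
  refine SimpleGraph.boxProd_adj.mpr (Or.inr ⟨?_, rfl⟩)
  show (SimpleGraph.pathGraph 2).Adj s t
  refine SimpleGraph.pathGraph_adj.mpr ?_
  have hs := s.isLt
  have ht := t.isLt
  have : s.val ≠ t.val := fun h => hst (Fin.ext h)
  omega

lemma lad_adj_horiz {i j : Fin n} {s : Fin 2} (hij : i.val + 1 = j.val ∨ j.val + 1 = i.val) :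
    (Lad n).Adj (i, s) (j, s) := by
  exact SimpleGraph.boxProd_adj.mpr (Or.inl ⟨SimpleGraph.pathGraph_adj.mpr hij, rfl⟩)

lemma card_filter_lt (c : ℕ) (hcn : c ≤ n) :
    (Finset.univ.filter (fun i : Fin n => i.val < c)).card = c := by
  refine Finset.card_eq_of_bijective (fun i h => ⟨i, lt_of_lt_of_le h hcn⟩) ?_ ?_ ?_
  · intro a ha
    have := (Finset.mem_filter.mp ha).2
    exact ⟨a.val, this, Fin.ext rfl⟩
  · intro i h
    simp only [Finset.mem_filter, Finset.mem_univ, true_and]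
    exact h
  · intro i j hi hj hij
    exact Fin.val_eq_of_eq hij

lemma card_filter_gt (c : ℕ) (hcn : c < n) :
    (Finset.univ.filter (fun i : Fin n => c < i.val)).card = n - 1 - c := by
  refine Finset.card_eq_of_bijective (fun i h => ⟨c + 1 + i, by omega⟩) ?_ ?_ ?_
  · intro a ha
    have := (Finset.mem_filter.mp ha).2
    refine ⟨a.val - c - 1, by have := a.isLt; omega, Fin.ext ?_⟩
    simp only
    have := a.isLt
    omega
  · intro i h
    simp only [Finset.mem_filter, Finset.mem_univ, true_and]
    omega
  · intro i j hi hj hij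
    have := Fin.val_eq_of_eq hij
    simp only at this
    omega

/-- The left block: all vertices in columns `< c`. -/
def LsideF (n c : ℕ) : Finset (Fin n × Fin 2) :=
  Finset.univ.filter (fun v => v.1.val < c)

lemma card_Lside (c : ℕ) (hcn : c ≤ n) : (LsideF n c).card = 2 * c := by
  have : LsideF n c = (Finset.univ.filter (fun i : Fin n => i.val < c)) ×ˢ
      (Finset.univ : Finset (Fin 2)) := by
    ext ⟨i, t⟩
    simp [LsideF, Finset.mem_product]
  rw [this, Finset.card_product, card_filter_lt c hcn]
  simp [Finset.card_univ]
  omega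

lemma card_Rside (c : ℕ) (hcn : c < n) :
    (Finset.univ.filter (fun v : Fin n × Fin 2 => c < v.1.val)).card = 2 * (n - 1 - c) := by
  have : (Finset.univ.filter (fun v : Fin n × Fin 2 => c < v.1.val)) =
      (Finset.univ.filter (fun i : Fin n => c < i.val)) ×ˢ (Finset.univ : Finset (Fin 2)) := by
    ext ⟨i, t⟩
    simp [Finset.mem_product]
  rw [this, Finset.card_product, card_filter_gt c hcn]
  simp [Finset.card_univ]
  omega

lemma col_lt_of_rt {s : Finset (Fin n × Fin 2)} {c : ℕ}
    (hcol : ∀ w ∈ s, w.1.val ≠ c) {u v : Fin n × Fin 2}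
    (h : Relation.ReflTransGen (stepRel (Lad n) s) u v) (hu : u.1.val < c) : v.1.val < c := by
  induction h with
  | refl => exact hu
  | @tail b d hub hbd ih =>
    have hd := hcol d hbd.2.1
    rcases lad_adj_col hbd.2.2 with h1 | h1 | h1
    · rw [← h1]; exact ih
    · omega
    · omega

lemma col_gt_of_rt {s : Finset (Fin n × Fin 2)} {c : ℕ}
    (hcol : ∀ w ∈ s, w.1.val ≠ c) {u v : Fin n × Fin 2}
    (h : Relation.ReflTransGen (stepRel (Lad n) s) u v) (hu : c < u.1.val) : c < v.1.val := by
  induction h with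
  | refl => exact hu
  | @tail b d hub hbd ih =>
    have hd := hcol d hbd.2.1
    rcases lad_adj_col hbd.2.2 with h1 | h1 | h1
    · rw [← h1]; exact ih
    · omega
    · omega

lemma eq_Lside (hn : 1 ≤ n) {W : Finset (Fin n × Fin 2)}
    (hW : ConnOn (Lad n) W) (hcard : n ≤ W.card)
    (hcol : ∀ w ∈ W, w.1.val ≠ n / 2) : W = LsideF n (n / 2) := by
  set c := n / 2 with hc
  rw [connOn_iff] at hW
  obtain ⟨⟨w₀, hw₀⟩, hrt⟩ := hW
  have hw₀c := hcol w₀ hw₀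
  rcases lt_or_gt_of_ne hw₀c with h₀ | h₀
  · -- everything on the left
    have hsub : W ⊆ LsideF n c := by
      intro v hv
      simp only [LsideF, Finset.mem_filter, Finset.mem_univ, true_and]
      exact col_lt_of_rt hcol (hrt w₀ hw₀ v hv) h₀
    have hLc : (LsideF n c).card = 2 * c := card_Lside c (by omega)
    refine Finset.eq_of_subset_of_card_le hsub ?_
    rw [hLc]
    omega
  · -- everything on the right : impossible
    exfalso
    have hsub : W ⊆ Finset.univ.filter (fun v : Fin n × Fin 2 => c < v.1.val) := by
      intro v hv
      simp only [Finset.mem_filter, Finset.mem_univ, true_and]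
      exact col_gt_of_rt hcol (hrt w₀ hw₀ v hv) h₀
    have := Finset.card_le_card hsub
    rw [card_Rside c (by omega)] at this
    omega

lemma exists_nbr (hn : 1 ≤ n) {W : Finset (Fin n × Fin 2)}
    (hW : ConnOn (Lad n) W) (hcard : n ≤ W.card) (l : Fin 2)
    (hx : (⟨n / 2, by omega⟩, l) ∉ W) :
    ∃ w ∈ W, (Lad n).Adj (⟨n / 2, by omega⟩, l) w := by
  by_contra hno
  push_neg at hno
  set c := n / 2 with hc
  set cc : Fin n := ⟨c, by omega⟩ with hcc
  have hcol : ∀ w ∈ W, w.1.val ≠ c := by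
    intro w hw hwc
    have hw1 : w.1 = cc := Fin.ext hwc
    by_cases hwl : w.2 = l
    · apply hx
      have : w = (cc, l) := Prod.ext hw1 hwl
      rwa [this] at hw
    · refine hno w hw ?_
      have : w = (cc, w.2) := Prod.ext hw1 rfl
      rw [this]
      exact lad_adj_vert (fun h => hwl h.symm)
  have hWL := eq_Lside hn hW hcard hcol
  have hc1 : 1 ≤ c := by
    have : (LsideF n c).card = 2 * c := card_Lside c (by omega)
    have hWc : W.card = 2 * c := by rw [hWL, this]
    omega
  have hmem : ((⟨c - 1, by omega⟩ : Fin n), l) ∈ W := by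
    rw [hWL]
    simp only [LsideF, Finset.mem_filter, Finset.mem_univ, true_and]
    omega
  exact hno _ hmem (lad_adj_horiz (by simp only [hcc, hc]; omega))

end Ladder

/-! ### Theorem B : the unanchored case for the ladder -/

theorem thmB {n : ℕ} (hn : 1 ≤ n) (R : ℕ) (hR : n ≤ R) :
    ∀ (k : ℕ) (U : Finset (Fin n × Fin 2)), U.card = k → VD (SigmaC (Lad n) U ∅ R) := by
  intro k
  induction k using Nat.strong_induction_on with
  | _ k ih =>
    intro U hUcard
    have hUA : (∅ : Finset (Fin n × Fin 2)) ∩ U = ∅ := Finset.empty_inter U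
    have hsupp_conn : ∀ F ∈ Supp (Lad n) U ∅ R, ConnOn (Lad n) F := by
      intro F hF
      have := hF.2.2.2
      rwa [Finset.union_empty] at this
    by_cases hsub : ∀ F₁ ∈ Supp (Lad n) U ∅ R, ∀ F₂ ∈ Supp (Lad n) U ∅ R, F₁ = F₂
    · -- at most one witness : void or simplex
      by_cases hS : Supp (Lad n) U ∅ R = ∅
      · have : SigmaC (Lad n) U ∅ R = ∅ := by
          ext H
          simp only [Set.mem_empty_iff_false, iff_false]
          rintro ⟨F, hF, _⟩
          rw [hS] at hF
          exact hF
        rw [this]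
        exact VD.void
      · obtain ⟨F₀, hF₀⟩ := Set.nonempty_iff_ne_empty.mpr hS
        have : SigmaC (Lad n) U ∅ R = {t | t ⊆ U \ F₀} := by
          ext H
          rw [mem_sigmaC hUA]
          constructor
          · rintro ⟨F, hF, hsubH⟩
            rwa [hsub F hF F₀ hF₀] at hsubH
          · intro hH
            exact ⟨F₀, hF₀, hH⟩
        rw [this]
        exact VD.simplex (U \ F₀)
    · push_neg at hsub
      obtain ⟨F₁, hF₁, F₂, hF₂, hF₁₂⟩ := hsub
      -- some vertex of the middle column is in U
      have hxcol : ∃ l : Fin 2, ((⟨n / 2, by omega⟩ : Fin n), l) ∈ U := by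
        by_contra hno
        push_neg at hno
        apply hF₁₂
        have key : ∀ F ∈ Supp (Lad n) U ∅ R, F = LsideF n (n / 2) := by
          intro F hF
          refine eq_Lside hn (hsupp_conn F hF) (hR.trans hF.2.1.ge) ?_
          intro w hw hwc
          have hw1 : w = ((⟨n / 2, by omega⟩ : Fin n), w.2) := Prod.ext (Fin.ext hwc) rfl
          exact hno w.2 (hw1 ▸ hF.1 hw)
        rw [key F₁ hF₁, key F₂ hF₂]
      obtain ⟨l, hxU⟩ := hxcol
      set x : Fin n × Fin 2 := ((⟨n / 2, by omega⟩ : Fin n), l) with hxdef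
      have hcard' : (U.erase x).card < k := by
        rw [Finset.card_erase_of_mem hxU, hUcard]
        have : 0 < k := by rw [← hUcard]; exact Finset.card_pos.mpr ⟨x, hxU⟩
        omega
      have hR1 : 1 ≤ R := by omega
      -- split condition
      have hsplit : SplitCond (Lad n) U ∅ R x := by
        intro F hF hxF
        have hFconn := hsupp_conn F hF
        have hFcard : n ≤ F.card := hR.trans hF.2.1.ge
        obtain ⟨w, hw, hadj⟩ := exists_nbr hn hFconn hFcard l hxF
        have hZconn : ConnOn (Lad n) (insert x F) := connOn_insert hFconn hw hadj
        have hBZ : ({x} : Finset (Fin n × Fin 2)) ⊆ insert x F := by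
          simp [Finset.singleton_subset_iff]
        have hFne : F.Nonempty := by rw [← Finset.card_pos, hF.2.1]; omega
        have hBne : ({x} : Finset (Fin n × Fin 2)) ≠ insert x F := by
          intro h
          obtain ⟨v, hv⟩ := hFne
          have hvx : v ∈ ({x} : Finset (Fin n × Fin 2)) := by
            rw [h]; exact Finset.mem_insert_of_mem hv
          rw [Finset.mem_singleton] at hvx
          exact hxF (hvx ▸ hv)
        obtain ⟨y, hy, hyconn⟩ := prune (Lad n) _ (insert x F) {x} rfl hZconn
          (connOn_singleton _ x) hBZ hBne
        have hy1 := Finset.mem_sdiff.mp hy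
        have hyx : y ≠ x := by
          intro h
          exact hy1.2 (h ▸ Finset.mem_singleton_self x)
        have hyF : y ∈ F := by
          rcases Finset.mem_insert.mp hy1.1 with h | h
          · exact absurd h hyx
          · exact h
        refine ⟨(insert x F).erase y, ⟨?_, ?_, ?_, ?_⟩, ?_, ?_⟩
        · exact (Finset.erase_subset _ _).trans (Finset.insert_subset hxU hF.1)
        · rw [Finset.card_erase_of_mem (Finset.mem_insert_of_mem hyF),
            Finset.card_insert_of_notMem hxF, hF.2.1]
          omega
        · simp
        · rw [Finset.union_empty]
          exact hyconn
        · exact Finset.mem_erase.mpr ⟨fun h => hyx h.symm, Finset.mem_insert_self _ _⟩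
        · intro v hv
          have h1 := Finset.mem_sdiff.mp hv
          have h2 := Finset.mem_erase.mp h1.1
          rcases Finset.mem_insert.mp h2.2 with rfl | hvF
          · exact absurd (Finset.mem_singleton_self _) h1.2
          · exact hvF
      have hxA' : insert x (∅ : Finset (Fin n × Fin 2)) = {x} := rfl
      have hsing_conn : ConnOn (Lad n) {x} := connOn_singleton _ x
      have hsing_ne : ({x} : Finset (Fin n × Fin 2)).Nonempty := ⟨x, Finset.mem_singleton_self x⟩
      have hsing_disj : ({x} : Finset (Fin n × Fin 2)) ∩ U.erase x = ∅ := by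
        ext v
        simp only [Finset.mem_inter, Finset.mem_singleton, Finset.mem_erase,
          Finset.notMem_empty, iff_false]
        rintro ⟨rfl, hne, _⟩
        exact hne rfl
      by_cases hall : ∀ F ∈ Supp (Lad n) U ∅ R, x ∈ F
      · -- ghost
        rw [ghost_eq hall, del_eq hxU hUA hR1 hsplit, hxA']
        exact thmA (Lad n) (U.erase x).card (U.erase x) {x} (R - 1) rfl
          hsing_ne hsing_conn hsing_disj
      · push_neg at hall
        obtain ⟨F₃, hF₃, hxF₃⟩ := hall
        have hxmem : {x} ∈ SigmaC (Lad n) U ∅ R := by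
          rw [mem_sigmaC hUA]
          exact ⟨F₃, hF₃, Finset.singleton_subset_iff.mpr (Finset.mem_sdiff.mpr ⟨hxU, hxF₃⟩)⟩
        have hlink : VD (linkC (SigmaC (Lad n) U ∅ R) x) := by
          rw [link_eq hxU hUA]
          exact ih _ hcard' (U.erase x) rfl
        have hdel : VD (delC (SigmaC (Lad n) U ∅ R) x) := by
          rw [del_eq hxU hUA hR1 hsplit, hxA']
          exact thmA (Lad n) (U.erase x).card (U.erase x) {x} (R - 1) rfl
            hsing_ne hsing_conn hsing_disj
        exact VD.step _ x hxmem (shed_of_split hxU hUA hsplit) hlink hdel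

/-- For `r ≥ 2`, `1 ≤ n ≤ r`, the complex `Σ_r(P_n × P_2)` of the ladder
graph is vertex decomposable. -/
theorem sigma_ladder_vd (n r : ℕ) (hn : 1 ≤ n) (hr : 2 ≤ r) (h : n ≤ r) :
    VD (SigmaG ((SimpleGraph.pathGraph n).boxProd (SimpleGraph.pathGraph 2))
        Finset.univ r) := by
  have hGS : SigmaG (Lad n) Finset.univ r = SigmaC (Lad n) Finset.univ ∅ r := by
    ext H
    unfold SigmaG SigmaC ConR Supp
    simp only [Set.mem_setOf_eq]
    constructor
    · rintro ⟨W, hW, hsub⟩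
      refine ⟨W, ⟨hW.1, hW.2.1, by simp, by rw [Finset.union_empty]; exact hW.2.2⟩, by rwa [Finset.sdiff_empty]⟩
    · rintro ⟨F, hF, hsub⟩
      refine ⟨F, ⟨hF.1, hF.2.1, by rw [← Finset.union_empty F]; exact hF.2.2.2⟩,
        by rwa [Finset.sdiff_empty] at hsub⟩
  exact hGS ▸ thmB hn r h Finset.univ.card Finset.univ rfl
end Framework
end
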